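/- arXiv:1901.00694 — 6 statements merged into one kernel-verified Lean document; each statement's English description precedes it below -/
import Mathlib

section
/- Let f be a monic polynomial of degree d ≥ 1 with simple (distinct) zeros z_1, …, z_d ∈ ℂ ∖ {0}, and let g be a complex polynomial of degree at most d. For every n ≥ deg(g), the d×d matrix E with entries e_{l,m} = k_{n+d}(z_l, z_m) is invertible; moreover there exists a unique polynomial q of degree at most n minimizing ‖g − p f‖_ω over all polynomials p of degree at most n, and for every z ∈ ℂ one has g(z) − q(z) f(z) = L(z) · E^{-1} · g_Z^t, where L(z) = (k_{n+d}(z, z_1), …, k_{n+d}(z, z_d)) is a row vector and g_Z = (g(z_1), …, g(z_d)). -/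
/-! On polynomials of degree at most `N = n + d` put the inner product
`⟪u, v⟫ = ∑_{k ≤ N} u_k conj(v_k) ω_k`, for which `k_N(·, w)` reproduces evaluation at `w`.
If `E v = 0`, then `P = ∑ v_m k_N(·, z_m)` vanishes at every node, so `⟪P, P⟫ = 0` and `P = 0`;
its coefficients are a Vandermonde system in the `conj (z_m)`, whence `v = 0`.
The combination `r` with coefficients `E⁻¹ g_Z` interpolates `g` at the nodes, and so does
every residual `h = g - p f`; then `h - r ⊥ r`, so `‖h‖² = ‖r‖² + ‖h - r‖²` and `r = g - q₀ f`
is the unique minimal residual. -/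

/-- The squared weighted `H²_ω` norm of a polynomial `g = ∑ a_k z^k`,
namely `∑_k |a_k|² ω_k`. -/
noncomputable def wnormSq (ω : ℕ → ℝ) (g : Polynomial ℂ) : ℝ :=
  ∑ k ∈ Finset.range (g.natDegree + 1), ‖g.coeff k‖ ^ 2 * ω k

/-- The partial reproducing kernel `k_m(z,w) = ∑_{k=0}^m \overline{w}^k z^k / ω_k`. -/
noncomputable def wker (ω : ℕ → ℝ) (m : ℕ) (z w : ℂ) : ℂ :=
  ∑ k ∈ Finset.range (m + 1), (starRingEnd ℂ w) ^ k * z ^ k / (ω k : ℂ)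

open Polynomial Finset ComplexConjugate
open scoped Matrix

noncomputable section

section WeightedInner

variable (ω : ℕ → ℝ) (N : ℕ)

def wInner (u v : ℂ[X]) : ℂ :=
  ∑ k ∈ range (N + 1), u.coeff k * conj (v.coeff k) * ω k

def truncNormSq (t : ℂ[X]) : ℝ :=
  ∑ k ∈ range (N + 1), ‖t.coeff k‖ ^ 2 * ω k

variable {ω N}

theorem wnormSq_eq_truncNormSq {t : ℂ[X]} (ht : t.natDegree ≤ N) :
    wnormSq ω t = truncNormSq ω N t := by
  refine sum_subset (fun k hk => by simp only [mem_range] at hk ⊢; omega) fun k _ hk => ?_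
  rw [coeff_eq_zero_of_natDegree_lt (by simpa using hk)]
  simp

@[simp]
theorem truncNormSq_zero : truncNormSq ω N 0 = 0 := by
  simp [truncNormSq]

theorem ofReal_truncNormSq (t : ℂ[X]) : (truncNormSq ω N t : ℂ) = wInner ω N t t := by
  simp [truncNormSq, wInner, Complex.mul_conj, Complex.sq_norm]

theorem truncNormSq_add (a b : ℂ[X]) :
    truncNormSq ω N (a + b) =
      truncNormSq ω N a + truncNormSq ω N b + 2 * (wInner ω N a b).re := by
  simp only [truncNormSq, wInner, coeff_add, Complex.re_sum, mul_sum, ← sum_add_distrib]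
  refine sum_congr rfl fun k _ => ?_
  simp only [Complex.sq_norm, Complex.normSq_add, Complex.re_mul_ofReal]
  ring

theorem truncNormSq_nonneg (hω : ∀ k, 0 ≤ ω k) (t : ℂ[X]) : 0 ≤ truncNormSq ω N t :=
  sum_nonneg fun k _ => mul_nonneg (sq_nonneg _) (hω k)

theorem eq_zero_of_truncNormSq_eq_zero (hω : ∀ k, 0 < ω k) {t : ℂ[X]}
    (ht : t.natDegree ≤ N) (h : truncNormSq ω N t = 0) : t = 0 := by
  have hterm := (sum_eq_zero_iff_of_nonneg fun k _ =>
    mul_nonneg (sq_nonneg ‖t.coeff k‖) (hω k).le).mp h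
  ext k
  rcases le_or_gt k N with hk | hk
  · simpa [(hω k).ne'] using hterm k (mem_range.mpr (Nat.lt_succ_of_le hk))
  · exact coeff_eq_zero_of_natDegree_lt (ht.trans_lt hk)

end WeightedInner

section Kernel

variable (ω : ℕ → ℝ) (N : ℕ) {d : ℕ}

def kerPoly (w : ℂ) : ℂ[X] :=
  ∑ k ∈ range (N + 1), monomial k (conj w ^ k / ω k)

def kerComb (z v : Fin d → ℂ) : ℂ[X] :=
  ∑ m, C (v m) * kerPoly ω N (z m)

def kerGram (z : Fin d → ℂ) : Matrix (Fin d) (Fin d) ℂ :=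
  Matrix.of fun l m => wker ω N (z l) (z m)

variable {ω N}

theorem coeff_kerPoly (w : ℂ) (k : ℕ) :
    (kerPoly ω N w).coeff k = if k ≤ N then conj w ^ k / ω k else 0 := by
  simp [kerPoly, coeff_monomial]

theorem natDegree_kerPoly_le (w : ℂ) : (kerPoly ω N w).natDegree ≤ N :=
  natDegree_le_iff_coeff_eq_zero.mpr fun k hk => by
    rw [coeff_kerPoly, if_neg (not_le.mpr (mod_cast hk))]

theorem eval_kerPoly (w x : ℂ) : (kerPoly ω N w).eval x = wker ω N x w := by
  simp only [kerPoly, wker, eval_finsetSum, eval_monomial]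
  exact sum_congr rfl fun k _ => by ring

theorem wInner_kerPoly (hω : ∀ k, ω k ≠ 0) {u : ℂ[X]} (hu : u.natDegree ≤ N) (w : ℂ) :
    wInner ω N u (kerPoly ω N w) = u.eval w := by
  rw [eval_eq_sum_range' (Nat.lt_succ_of_le hu)]
  refine sum_congr rfl fun k hk => ?_
  rw [coeff_kerPoly, if_pos (Nat.le_of_lt_succ (mem_range.mp hk)), map_div₀, map_pow,
    Complex.conj_conj, Complex.conj_ofReal]
  field_simp [Complex.ofReal_ne_zero.mpr (hω k)]

theorem coeff_kerComb (z v : Fin d → ℂ) (k : ℕ) :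
    (kerComb ω N z v).coeff k = ∑ m, v m * (kerPoly ω N (z m)).coeff k := by
  simp [kerComb]

theorem natDegree_kerComb_le (z v : Fin d → ℂ) : (kerComb ω N z v).natDegree ≤ N :=
  natDegree_sum_le_of_forall_le _ _ fun _ _ =>
    (natDegree_C_mul_le _ _).trans (natDegree_kerPoly_le _)

theorem eval_kerComb (z v : Fin d → ℂ) (x : ℂ) :
    (kerComb ω N z v).eval x = ∑ m, v m * wker ω N x (z m) := by
  simp [kerComb, eval_finsetSum, eval_kerPoly]

theorem wInner_kerComb (hω : ∀ k, ω k ≠ 0) {u : ℂ[X]} (hu : u.natDegree ≤ N)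
    (z v : Fin d → ℂ) :
    wInner ω N u (kerComb ω N z v) = ∑ m, conj (v m) * u.eval (z m) := by
  simp_rw [← wInner_kerPoly hω hu, wInner, coeff_kerComb, map_sum, mul_sum, sum_mul]
  rw [sum_comm]
  exact sum_congr rfl fun m _ => sum_congr rfl fun k _ => by simp only [map_mul]; ring

theorem eq_zero_of_kerComb_eq_zero (hω : ∀ k, ω k ≠ 0) (hd : d ≤ N + 1) {z : Fin d → ℂ}
    (hz : Function.Injective z) {v : Fin d → ℂ} (h : kerComb ω N z v = 0) : v = 0 := by
  refine Matrix.eq_zero_of_forall_pow_sum_mul_pow_eq_zero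
    (f := fun m => conj (z m)) (star_injective.comp hz) fun k => ?_
  have hk := congrArg (coeff · k) h
  simp only [coeff_kerComb, coeff_kerPoly, if_pos (show (k : ℕ) ≤ N by omega), coeff_zero,
    ← mul_div_assoc, ← sum_div, div_eq_zero_iff, Complex.ofReal_eq_zero, hω k, or_false] at hk
  exact hk

theorem mulVec_kerGram (z v : Fin d → ℂ) (l : Fin d) :
    (kerGram ω N z *ᵥ v) l = (kerComb ω N z v).eval (z l) := by
  simp [Matrix.mulVec, dotProduct, kerGram, eval_kerComb, mul_comm]

theorem det_kerGram_ne_zero (hω : ∀ k, 0 < ω k) (hd : d ≤ N + 1) {z : Fin d → ℂ}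
    (hz : Function.Injective z) : (kerGram ω N z).det ≠ 0 := by
  intro hdet
  obtain ⟨v, hv, hEv⟩ := Matrix.exists_mulVec_eq_zero_iff.mpr hdet
  have hvanish : ∀ l, (kerComb ω N z v).eval (z l) = 0 := fun l => by
    rw [← mulVec_kerGram, hEv, Pi.zero_apply]
  have hnorm : truncNormSq ω N (kerComb ω N z v) = 0 := by
    have := ofReal_truncNormSq (ω := ω) (N := N) (kerComb ω N z v)
    rw [wInner_kerComb (fun k => (hω k).ne') (natDegree_kerComb_le z v)] at this
    simpa [hvanish] using this
  exact hv <| eq_zero_of_kerComb_eq_zero (fun k => (hω k).ne') hd hz <|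
    eq_zero_of_truncNormSq_eq_zero hω (natDegree_kerComb_le z v) hnorm

theorem truncNormSq_eq_add_of_eval_eq (hω : ∀ k, ω k ≠ 0) {h : ℂ[X]} (hh : h.natDegree ≤ N)
    {z v : Fin d → ℂ} (heval : ∀ m, h.eval (z m) = (kerComb ω N z v).eval (z m)) :
    truncNormSq ω N h =
      truncNormSq ω N (kerComb ω N z v) + truncNormSq ω N (h - kerComb ω N z v) := by
  have horth : wInner ω N (h - kerComb ω N z v) (kerComb ω N z v) = 0 := by
    rw [wInner_kerComb hω ((natDegree_sub_le _ _).trans (max_le hh (natDegree_kerComb_le z v)))]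
    simp [heval]
  conv_lhs => rw [← sub_add_cancel h (kerComb ω N z v)]
  rw [truncNormSq_add, horth, Complex.zero_re, mul_zero, add_zero, add_comm]

theorem eval_kerComb_kerGram_inv_mulVec {z : Fin d → ℂ} (hdet : (kerGram ω N z).det ≠ 0)
    (y : Fin d → ℂ) (l : Fin d) :
    (kerComb ω N z ((kerGram ω N z)⁻¹ *ᵥ y)).eval (z l) = y l := by
  rw [← mulVec_kerGram, Matrix.mulVec_mulVec, Matrix.mul_nonsing_inv _ hdet.isUnit,
    Matrix.one_mulVec]

end Kernel

section LeastSquares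

variable {d n : ℕ} {z : Fin d → ℂ}

theorem prod_X_sub_C_dvd (hz : Function.Injective z) {p : ℂ[X]} (hp : ∀ i, p.eval (z i) = 0) :
    (∏ i, (X - C (z i))) ∣ p :=
  prod_dvd_of_coprime ((pairwise_coprime_X_sub_C hz).set_pairwise _) fun i _ =>
    dvd_iff_isRoot.mpr (hp i)

theorem natDegree_sub_mul_prod_le {g p : ℂ[X]} (hg : g.natDegree ≤ n) (hp : p.natDegree ≤ n) :
    (g - p * ∏ i, (X - C (z i))).natDegree ≤ n + d := by
  refine (natDegree_sub_le _ _).trans (max_le (by omega) (natDegree_mul_le.trans ?_))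
  simp [hp]

theorem eval_sub_mul_prod (g p : ℂ[X]) (j : Fin d) :
    (g - p * ∏ i, (X - C (z i))).eval (z j) = g.eval (z j) := by
  simp [eval_prod, prod_eq_zero (mem_univ j)]

theorem exists_sub_mul_prod_eq (hz : Function.Injective z) {g r : ℂ[X]} (hg : g.natDegree ≤ n)
    (hr : r.natDegree ≤ n + d) (heval : ∀ i, r.eval (z i) = g.eval (z i)) :
    ∃ q : ℂ[X], q.natDegree ≤ n ∧ g - q * ∏ i, (X - C (z i)) = r := by
  obtain ⟨q, hq⟩ := prod_X_sub_C_dvd hz (p := g - r) fun i => by simp [heval]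
  refine ⟨q, ?_, by rw [mul_comm, ← hq]; ring⟩
  rcases eq_or_ne q 0 with rfl | hq0
  · simp
  have hdeg := (monic_prod_X_sub_C z univ).natDegree_mul' hq0
  rw [← hq, natDegree_finsetProd_X_sub_C_eq_card, card_univ, Fintype.card_fin] at hdeg
  have := natDegree_sub_le g r
  omega

theorem forall_wnormSq_sub_mul_prod_le_iff {ω : ℕ → ℝ} (hω : ∀ k, 0 < ω k)
    (hz : Function.Injective z) {g q : ℂ[X]} (hg : g.natDegree ≤ n) (hq : q.natDegree ≤ n)
    {v : Fin d → ℂ} (hv : ∀ i, (kerComb ω (n + d) z v).eval (z i) = g.eval (z i)) :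
    (∀ p : ℂ[X], p.natDegree ≤ n →
        wnormSq ω (g - q * ∏ i, (X - C (z i))) ≤ wnormSq ω (g - p * ∏ i, (X - C (z i)))) ↔
      g - q * ∏ i, (X - C (z i)) = kerComb ω (n + d) z v := by
  set r := kerComb ω (n + d) z v
  have hpyth : ∀ p : ℂ[X], p.natDegree ≤ n →
      wnormSq ω (g - p * ∏ i, (X - C (z i))) =
        truncNormSq ω (n + d) r + truncNormSq ω (n + d) (g - p * ∏ i, (X - C (z i)) - r) :=
    fun p hp => by
      rw [wnormSq_eq_truncNormSq (natDegree_sub_mul_prod_le hg hp)]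
      exact truncNormSq_eq_add_of_eval_eq (fun k => (hω k).ne')
        (natDegree_sub_mul_prod_le hg hp) fun i => by rw [eval_sub_mul_prod, hv]
  constructor
  · intro hmin
    obtain ⟨q₀, hq₀, hq₀r⟩ := exists_sub_mul_prod_eq hz hg (natDegree_kerComb_le z v) hv
    have hle := hmin q₀ hq₀
    rw [hpyth q hq, hpyth q₀ hq₀, hq₀r, sub_self] at hle
    refine sub_eq_zero.mp (eq_zero_of_truncNormSq_eq_zero hω
      ((natDegree_sub_le _ _).trans (max_le (natDegree_sub_mul_prod_le hg hq)
        (natDegree_kerComb_le z v))) ?_)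
    rw [truncNormSq_zero, add_zero, add_le_iff_nonpos_right] at hle
    exact le_antisymm hle (truncNormSq_nonneg (fun k => (hω k).le) _)
  · intro hqr p hp
    rw [hpyth q hq, hpyth p hp, hqr, sub_self, truncNormSq_zero, add_zero]
    exact le_add_of_nonneg_right (truncNormSq_nonneg (fun k => (hω k).le) _)

end LeastSquares

end

theorem stmt0_general
    (ω : ℕ → ℝ) (hωpos : ∀ k, 0 < ω k)
    (d : ℕ) (z : Fin d → ℂ)
    (hzinj : Function.Injective z)
    (f : Polynomial ℂ) (hf : f = ∏ i, (Polynomial.X - Polynomial.C (z i)))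
    (g : Polynomial ℂ)
    (n : ℕ) (hn : g.natDegree ≤ n)
    (E : Matrix (Fin d) (Fin d) ℂ)
    (hE : ∀ l m, E l m = wker ω (n + d) (z l) (z m)) :
    IsUnit E.det ∧
    (∃! q : Polynomial ℂ, q.natDegree ≤ n ∧
      ∀ p : Polynomial ℂ, p.natDegree ≤ n →
        wnormSq ω (g - q * f) ≤ wnormSq ω (g - p * f)) ∧
    (∀ q : Polynomial ℂ, q.natDegree ≤ n →
      (∀ p : Polynomial ℂ, p.natDegree ≤ n →
        wnormSq ω (g - q * f) ≤ wnormSq ω (g - p * f)) →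
      ∀ w : ℂ, g.eval w - q.eval w * f.eval w =
        ∑ l, ∑ m, wker ω (n + d) w (z l) * E⁻¹ l m * g.eval (z m)) := by
  obtain rfl : E = kerGram ω (n + d) z := Matrix.ext hE
  subst hf
  have hdet := det_kerGram_ne_zero (N := n + d) hωpos (by omega) hzinj
  have hinterp := eval_kerComb_kerGram_inv_mulVec hdet fun m => g.eval (z m)
  have hmin q hq := forall_wnormSq_sub_mul_prod_le_iff hωpos hzinj hn (q := q) hq hinterp
  obtain ⟨q₀, hq₀, hq₀r⟩ := exists_sub_mul_prod_eq hzinj hn (natDegree_kerComb_le z _) hinterp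
  refine ⟨hdet.isUnit, ⟨q₀, ⟨hq₀, (hmin q₀ hq₀).2 hq₀r⟩, ?_⟩, ?_⟩
  · rintro q ⟨hq, hq_min⟩
    exact mul_right_cancel₀ (monic_prod_X_sub_C z univ).ne_zero
      (sub_right_injective (((hmin q hq).1 hq_min).trans hq₀r.symm))
  · intro q hq hq_min w
    rw [← eval_mul, ← eval_sub, (hmin q hq).1 hq_min, eval_kerComb]
    simp only [Matrix.mulVec, dotProduct, sum_mul]
    exact sum_congr rfl fun l _ => sum_congr rfl fun m _ => by ring

theorem stmt0
    (ω : ℕ → ℝ) (hω0 : ω 0 = 1) (hωpos : ∀ k, 0 < ω k)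
    (hωlim : Filter.Tendsto (fun k => ω k / ω (k + 1)) Filter.atTop (nhds 1))
    (d : ℕ) (hd : 0 < d) (z : Fin d → ℂ)
    (hzinj : Function.Injective z) (hz0 : ∀ i, z i ≠ 0)
    (f : Polynomial ℂ) (hf : f = ∏ i, (Polynomial.X - Polynomial.C (z i)))
    (g : Polynomial ℂ) (hgd : g.natDegree ≤ d)
    (n : ℕ) (hn : g.natDegree ≤ n)
    (E : Matrix (Fin d) (Fin d) ℂ)
    (hE : ∀ l m, E l m = wker ω (n + d) (z l) (z m)) :
    IsUnit E.det ∧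
    (∃! q : Polynomial ℂ, q.natDegree ≤ n ∧
      ∀ p : Polynomial ℂ, p.natDegree ≤ n →
        wnormSq ω (g - q * f) ≤ wnormSq ω (g - p * f)) ∧
    (∀ q : Polynomial ℂ, q.natDegree ≤ n →
      (∀ p : Polynomial ℂ, p.natDegree ≤ n →
        wnormSq ω (g - q * f) ≤ wnormSq ω (g - p * f)) →
      ∀ w : ℂ, g.eval w - q.eval w * f.eval w =
        ∑ l, ∑ m, wker ω (n + d) w (z l) * E⁻¹ l m * g.eval (z m)) :=
  stmt0_general ω hωpos d z hzinj f hf g n hn E hE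
end

section
/- Let f be a monic polynomial of degree d ≥ 1 with simple (distinct) zeros z_1, …, z_d, all satisfying |z_i| ≥ 1, and let g be a complex polynomial of degree at most d. Then there exists a constant C = C(g, d, ω) > 0 such that for all n ≥ deg(g), the minimum over polynomials p of degree at most n of ‖g − p f‖²_ω is at most C · (∑_{k=0}^n 1/ω_k)^{-1}. -/
/-!
Let `L_i` be the Lagrange basis at the zeros `z_i` of `f`, and let `r_i` be a polynomial of degree
at most `n` with `r_i(z_i) = 1` and `‖r_i‖²_ω ≤ (∑_{k ≤ n} ω_k⁻¹)⁻¹`, which exists because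
`‖z_i‖ ≥ 1`. Then `G = ∑ g(z_i) L_i r_i` agrees with `g` at every `z_i`, so `g - G = p f` with
`deg p ≤ n`. Since `ω_k / ω_{k+1} → 1`, the shift satisfies `ω_{k+1} ≤ M ω_k`, so multiplication
by the fixed polynomials `g(z_i) L_i` is bounded for `‖·‖_ω`, which bounds `‖G‖²_ω` by a constant
times `(∑_{k ≤ n} ω_k⁻¹)⁻¹`.
-/

open Polynomial Finset Filter Topology

theorem wnormSq_eq_sum_range (ω : ℕ → ℝ) {h : ℂ[X]} {N : ℕ} (hN : h.natDegree < N) :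
    wnormSq ω h = ∑ k ∈ range N, ‖h.coeff k‖ ^ 2 * ω k := by
  refine sum_subset (range_subset_range.2 hN) fun k _ hk => ?_
  rw [coeff_eq_zero_of_natDegree_lt (by simpa using hk), norm_zero, zero_pow two_ne_zero,
    zero_mul]

section

variable {ω : ℕ → ℝ}

theorem wnormSq_C_mul (a : ℂ) (h : ℂ[X]) : wnormSq ω (C a * h) = ‖a‖ ^ 2 * wnormSq ω h := by
  rw [wnormSq_eq_sum_range ω (Nat.lt_succ_of_le (natDegree_C_mul_le a h)), wnormSq, mul_sum]
  simp only [coeff_C_mul, norm_mul, mul_pow, mul_assoc]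

theorem wnormSq_X_mul_le {M : ℝ} (hM : ∀ k, ω (k + 1) ≤ M * ω k) (h : ℂ[X]) :
    wnormSq ω (X * h) ≤ M * wnormSq ω h := by
  have hdeg : (X * h).natDegree < h.natDegree + 1 + 1 := by
    have := natDegree_mul_le (p := X) (q := h)
    rw [natDegree_X] at this
    omega
  rw [wnormSq_eq_sum_range ω hdeg, sum_range_succ', wnormSq, mul_sum]
  simp only [coeff_X_mul, coeff_X_mul_zero, norm_zero, zero_pow two_ne_zero, zero_mul, add_zero]
  refine sum_le_sum fun k _ => ?_
  rw [mul_left_comm]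
  exact mul_le_mul_of_nonneg_left (hM k) (sq_nonneg _)

theorem wnormSq_sum_le (hω : ∀ k, 0 ≤ ω k) {ι : Type*} (s : Finset ι) (q : ι → ℂ[X]) :
    wnormSq ω (∑ i ∈ s, q i) ≤ #s * ∑ i ∈ s, wnormSq ω (q i) := by
  set N := (s.sup fun i => (q i).natDegree) + 1
  have hdeg : ∀ i ∈ s, (q i).natDegree < N := fun i hi =>
    Nat.lt_succ_of_le (le_sup (f := fun i => (q i).natDegree) hi)
  have hsum : (∑ i ∈ s, q i).natDegree < N :=
    Nat.lt_succ_of_le (natDegree_sum_le_of_forall_le s q fun i hi =>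
      le_sup (f := fun i => (q i).natDegree) hi)
  have hcoeff (k : ℕ) : ‖(∑ i ∈ s, q i).coeff k‖ ^ 2 ≤ #s * ∑ i ∈ s, ‖(q i).coeff k‖ ^ 2 :=
    calc ‖(∑ i ∈ s, q i).coeff k‖ ^ 2 ≤ (∑ i ∈ s, ‖(q i).coeff k‖) ^ 2 := by
          rw [finsetSum_coeff]; gcongr; exact norm_sum_le _ _
      _ ≤ #s * ∑ i ∈ s, ‖(q i).coeff k‖ ^ 2 := sq_sum_le_card_mul_sum_sq
  rw [wnormSq_eq_sum_range ω hsum, sum_congr rfl fun i hi => wnormSq_eq_sum_range ω (hdeg i hi),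
    sum_comm, mul_sum]
  refine sum_le_sum fun k _ => ?_
  rw [← sum_mul, ← mul_assoc]
  exact mul_le_mul_of_nonneg_right (hcoeff k) (hω k)

theorem wnormSq_add_le (hω : ∀ k, 0 ≤ ω k) (p q : ℂ[X]) :
    wnormSq ω (p + q) ≤ 2 * (wnormSq ω p + wnormSq ω q) := by
  simpa [Fin.sum_univ_two] using wnormSq_sum_le hω univ ![p, q]

theorem exists_wnormSq_mul_le (hω : ∀ k, 0 ≤ ω k) {M : ℝ} (hM0 : 0 ≤ M)
    (hM : ∀ k, ω (k + 1) ≤ M * ω k) (B : ℂ[X]) :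
    ∃ D, 0 ≤ D ∧ ∀ h, wnormSq ω (B * h) ≤ D * wnormSq ω h := by
  induction B using Polynomial.induction_on with
  | C a => exact ⟨‖a‖ ^ 2, by positivity, fun h => (wnormSq_C_mul a h).le⟩
  | add p q hp hq =>
    obtain ⟨Dp, hDp0, hDp⟩ := hp
    obtain ⟨Dq, hDq0, hDq⟩ := hq
    refine ⟨2 * (Dp + Dq), by positivity, fun h => ?_⟩
    calc wnormSq ω ((p + q) * h) ≤ 2 * (wnormSq ω (p * h) + wnormSq ω (q * h)) := by
          rw [add_mul]; exact wnormSq_add_le hω _ _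
      _ ≤ 2 * (Dp * wnormSq ω h + Dq * wnormSq ω h) := by gcongr; exacts [hDp h, hDq h]
      _ = 2 * (Dp + Dq) * wnormSq ω h := by ring
  | monomial n a ih =>
    obtain ⟨D, hD0, hD⟩ := ih
    refine ⟨M * D, by positivity, fun h => ?_⟩
    calc wnormSq ω (C a * X ^ (n + 1) * h) = wnormSq ω (X * (C a * X ^ n * h)) := by ring_nf
      _ ≤ M * wnormSq ω (C a * X ^ n * h) := wnormSq_X_mul_le hM _
      _ ≤ M * (D * wnormSq ω h) := by gcongr; exact hD h
      _ = M * D * wnormSq ω h := by ring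

theorem exists_succ_le_mul_of_tendsto_div_succ (hωpos : ∀ k, 0 < ω k)
    (hωlim : Tendsto (fun k => ω k / ω (k + 1)) atTop (𝓝 1)) :
    ∃ M, 0 ≤ M ∧ ∀ k, ω (k + 1) ≤ M * ω k := by
  have hlim : Tendsto (fun k => ω (k + 1) / ω k) atTop (𝓝 1) := by
    simpa using hωlim.inv₀ one_ne_zero
  obtain ⟨M, hM⟩ := hlim.bddAbove_range
  refine ⟨M, (div_pos (hωpos 1) (hωpos 0)).le.trans (hM ⟨0, rfl⟩), fun k => ?_⟩
  rw [← div_le_iff₀ (hωpos k)]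
  exact hM ⟨k, rfl⟩

/-- The witness is `∑_{k ≤ n} (X / z)^k / (T ω_k)` with `T = ∑_{k ≤ n} ω_k⁻¹`; since `1 ≤ ‖z‖`,
its squared norm is at most `∑_{k ≤ n} ω_k⁻¹ / T² = T⁻¹`. -/
theorem exists_eval_eq_one_wnormSq_le (hωpos : ∀ k, 0 < ω k) {z : ℂ} (hz : 1 ≤ ‖z‖) (n : ℕ) :
    ∃ r : ℂ[X], r.natDegree ≤ n ∧ r.eval z = 1 ∧
      wnormSq ω r ≤ (∑ k ∈ range (n + 1), (ω k)⁻¹)⁻¹ := by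
  set T := ∑ k ∈ range (n + 1), (ω k)⁻¹
  have hT : 0 < T := sum_pos (fun k _ => inv_pos.2 (hωpos k)) nonempty_range_add_one
  have hz0 : z ≠ 0 := norm_pos_iff.1 (one_pos.trans_le hz)
  set c : ℕ → ℂ := fun k => (z ^ k)⁻¹ * ((T * ω k : ℝ) : ℂ)⁻¹
  set r := ∑ k ∈ range (n + 1), monomial k (c k)
  have hcoeff : ∀ k ∈ range (n + 1), r.coeff k = c k := fun k hk => by
    simp [r, finsetSum_coeff, coeff_monomial, hk]
  have hdeg : r.natDegree ≤ n := natDegree_sum_le_of_forall_le _ _ fun k hk =>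
    (natDegree_monomial_le _).trans (mem_range_succ_iff.1 hk)
  refine ⟨r, hdeg, ?_, ?_⟩
  · have hterm (k : ℕ) : c k * z ^ k = (T : ℂ)⁻¹ * ((ω k : ℝ) : ℂ)⁻¹ := by
      simp only [c, Complex.ofReal_mul, mul_inv]
      field_simp
    simp only [r, eval_finsetSum, eval_monomial, hterm, ← mul_sum]
    have hsum : ∑ k ∈ range (n + 1), ((ω k : ℝ) : ℂ)⁻¹ = (T : ℂ) := by simp [T]
    rw [hsum, inv_mul_cancel₀ (Complex.ofReal_ne_zero.2 hT.ne')]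
  · rw [wnormSq_eq_sum_range ω (Nat.lt_succ_of_le hdeg),
      sum_congr rfl fun k hk => by rw [hcoeff k hk]]
    have hterm (k : ℕ) : ‖c k‖ ^ 2 * ω k ≤ (ω k)⁻¹ / T ^ 2 := by
      have hzk : 1 ≤ ‖z‖ ^ k := one_le_pow₀ hz
      have hωk := hωpos k
      simp only [c, norm_mul, norm_inv, norm_pow, Complex.norm_real, Real.norm_eq_abs,
        abs_of_pos hT, abs_of_pos hωk]
      calc ((‖z‖ ^ k)⁻¹ * (T * ω k)⁻¹) ^ 2 * ω k = ((‖z‖ ^ k)⁻¹) ^ 2 * ((ω k)⁻¹ / T ^ 2) := by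
            field_simp
        _ ≤ 1 * ((ω k)⁻¹ / T ^ 2) := by
            gcongr
            exact pow_le_one₀ (by positivity) (inv_le_one_of_one_le₀ hzk)
        _ = (ω k)⁻¹ / T ^ 2 := one_mul _
    calc ∑ k ∈ range (n + 1), ‖c k‖ ^ 2 * ω k ≤ ∑ k ∈ range (n + 1), (ω k)⁻¹ / T ^ 2 :=
          sum_le_sum fun k _ => hterm k
      _ = T⁻¹ := by rw [← sum_div, show T / T ^ 2 = T⁻¹ by field_simp]

end

theorem Lagrange.eval_sum_C_mul_basis_mul_at_node {F ι : Type*} [Field F] [DecidableEq ι]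
    {s : Finset ι} {v : ι → F} (hvs : Set.InjOn v s) (y : ι → F) {r : ι → F[X]}
    (hr : ∀ i ∈ s, (r i).eval (v i) = 1) {j : ι} (hj : j ∈ s) :
    (∑ i ∈ s, C (y i) * Lagrange.basis s v i * r i).eval (v j) = y j := by
  rw [eval_finsetSum, sum_eq_single j (fun i _ hij => by simp [eval_basis_of_ne hij hj])
    (fun hj' => absurd hj hj')]
  simp [eval_basis_self hvs hj, hr j hj]

theorem Lagrange.natDegree_sum_C_mul_basis_mul_le {F ι : Type*} [Field F] [DecidableEq ι]
    {s : Finset ι} {v : ι → F} (hvs : Set.InjOn v s) (y : ι → F) {r : ι → F[X]} {n : ℕ}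
    (hr : ∀ i ∈ s, (r i).natDegree ≤ n) :
    (∑ i ∈ s, C (y i) * Lagrange.basis s v i * r i).natDegree ≤ n + #s :=
  natDegree_sum_le_of_forall_le _ _ fun i hi => by
    have hCL := (natDegree_C_mul_le (y i) _).trans (natDegree_basis hvs hi).le
    have := natDegree_mul_le.trans (add_le_add hCL (hr i hi))
    omega

theorem exists_natDegree_le_sub_mul_prod_X_sub_C_eq {F ι : Type*} [Field F] [Fintype ι]
    {z : ι → F} (hz : Function.Injective z) {g G : F[X]} (hgG : ∀ i, g.eval (z i) = G.eval (z i))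
    {n : ℕ} (hg : g.natDegree ≤ n) (hG : G.natDegree ≤ n + Fintype.card ι) :
    ∃ p : F[X], p.natDegree ≤ n ∧ g - p * ∏ i, (X - C (z i)) = G := by
  obtain ⟨p, hp⟩ : ∏ i, (X - C (z i)) ∣ g - G :=
    prod_dvd_of_coprime ((pairwise_coprime_X_sub_C hz).set_pairwise _) fun i _ =>
      dvd_iff_isRoot.2 (by simp [hgG i])
  refine ⟨p, ?_, by rw [mul_comm, ← hp, sub_sub_cancel]⟩
  rcases eq_or_ne p 0 with rfl | hp0
  · simp
  have hdeg := (natDegree_sub_le g G).trans (max_le_max hg hG)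
  rw [hp, (monic_prod_X_sub_C z univ).natDegree_mul' hp0,
    natDegree_finsetProd_X_sub_C_eq_card, card_univ] at hdeg
  omega

theorem stmt2_general
    (ω : ℕ → ℝ) (hωpos : ∀ k, 0 < ω k)
    (hωlim : Filter.Tendsto (fun k => ω k / ω (k + 1)) Filter.atTop (nhds 1))
    (d : ℕ) (z : Fin d → ℂ)
    (hzinj : Function.Injective z) (hz : ∀ i, 1 ≤ ‖z i‖)
    (f : Polynomial ℂ) (hf : f = ∏ i, (Polynomial.X - Polynomial.C (z i)))
    (g : Polynomial ℂ) :
    ∃ C : ℝ, 0 < C ∧ ∀ n : ℕ, g.natDegree ≤ n →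
      ∃ p : Polynomial ℂ, p.natDegree ≤ n ∧
        wnormSq ω (g - p * f) ≤ C * (∑ k ∈ Finset.range (n + 1), (ω k)⁻¹)⁻¹ := by
  have hzinjOn : Set.InjOn z (univ : Finset (Fin d)) := hzinj.injOn
  set y : Fin d → ℂ := fun i => g.eval (z i)
  set B : Fin d → ℂ[X] := fun i => C (y i) * Lagrange.basis univ z i
  obtain ⟨M, hM0, hM⟩ := exists_succ_le_mul_of_tendsto_div_succ hωpos hωlim
  choose D hD0 hD using fun i => exists_wnormSq_mul_le (fun k => (hωpos k).le) hM0 hM (B i)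
  have hC : 0 ≤ d * ∑ i, D i := mul_nonneg d.cast_nonneg (sum_nonneg fun i _ => hD0 i)
  refine ⟨d * ∑ i, D i + 1, by positivity, fun n hn => ?_⟩
  set K := (∑ k ∈ range (n + 1), (ω k)⁻¹)⁻¹
  have hK : 0 ≤ K := inv_nonneg.2 (sum_nonneg fun k _ => (inv_pos.2 (hωpos k)).le)
  choose r hrdeg hr1 hrnorm using fun i => exists_eval_eq_one_wnormSq_le hωpos (hz i) n
  have hGdeg := Lagrange.natDegree_sum_C_mul_basis_mul_le hzinjOn y fun i _ => hrdeg i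
  obtain ⟨p, hpdeg, hp⟩ := exists_natDegree_le_sub_mul_prod_X_sub_C_eq hzinj
    (G := ∑ i, B i * r i)
    (fun j => (Lagrange.eval_sum_C_mul_basis_mul_at_node hzinjOn y (fun i _ => hr1 i)
      (mem_univ j)).symm) hn (by simpa using hGdeg)
  refine ⟨p, hpdeg, ?_⟩
  calc wnormSq ω (g - p * f) ≤ d * ∑ i, wnormSq ω (B i * r i) := by
        rw [hf, hp]
        simpa using wnormSq_sum_le (fun k => (hωpos k).le) univ fun i => B i * r i
    _ ≤ d * ∑ i, D i * K := by
        gcongr with i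
        exact (hD i (r i)).trans (mul_le_mul_of_nonneg_left (hrnorm i) (hD0 i))
    _ ≤ (d * ∑ i, D i + 1) * K := by
        rw [← sum_mul, ← mul_assoc]
        gcongr
        linarith

theorem stmt2
    (ω : ℕ → ℝ) (hω0 : ω 0 = 1) (hωpos : ∀ k, 0 < ω k)
    (hωlim : Filter.Tendsto (fun k => ω k / ω (k + 1)) Filter.atTop (nhds 1))
    (d : ℕ) (hd : 0 < d) (z : Fin d → ℂ)
    (hzinj : Function.Injective z) (hz : ∀ i, 1 ≤ ‖z i‖)
    (f : Polynomial ℂ) (hf : f = ∏ i, (Polynomial.X - Polynomial.C (z i)))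
    (g : Polynomial ℂ) (hgd : g.natDegree ≤ d) :
    ∃ C : ℝ, 0 < C ∧ ∀ n : ℕ, g.natDegree ≤ n →
      ∃ p : Polynomial ℂ, p.natDegree ≤ n ∧
        wnormSq ω (g - p * f) ≤ C * (∑ k ∈ Finset.range (n + 1), (ω k)⁻¹)⁻¹ :=
  stmt2_general ω hωpos hωlim d z hzinj hz f hf g
end

section
/- Let f be a monic polynomial of degree d ≥ 1 with simple (distinct) zeros z_1, …, z_d ∈ ℂ ∖ {0}, let n ∈ ℕ, and let p_n be the n-th optimal polynomial approximant to 1/f in H²_ω. Let E be the d×d matrix with entries e_{l,m} = k_{n+d}(z_l, z_m) (which is invertible), and set (A_{1,n}, …, A_{d,n})^t = E^{-1} · (1, …, 1)^t. Then for every k with 0 ≤ k ≤ n + d, the coefficient of z^k in the polynomial 1 − p_n f equals (1/ω_k) · ∑_{i=1}^d A_{i,n} \overline{z_i}^k. -/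
open Polynomial Finset ComplexConjugate
open scoped ComplexOrder

theorem inner_eq_zero_of_forall_norm_le_norm_sub_smul {𝕜 E : Type*} [RCLike 𝕜]
    [NormedAddCommGroup E] [InnerProductSpace 𝕜 E] {x y : E}
    (h : ∀ t : 𝕜, ‖x‖ ≤ ‖x - t • y‖) : inner 𝕜 x y = 0 := by
  have hmin : ‖x - 0‖ = ⨅ w : 𝕜 ∙ y, ‖x - w‖ := by
    refine le_antisymm (le_ciInf fun ⟨w, hw⟩ => ?_)
      (ciInf_le ⟨0, Set.forall_mem_range.2 fun _ => norm_nonneg _⟩ (0 : 𝕜 ∙ y))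
    obtain ⟨t, rfl⟩ := Submodule.mem_span_singleton.1 hw
    simpa using h t
  simpa using (Submodule.norm_eq_iInf_iff_inner_eq_zero _ (zero_mem _)).1 hmin y
    (Submodule.mem_span_singleton_self y)

theorem natDegree_one_sub_mul_le {R : Type*} [Ring R] {p f : R[X]} {n : ℕ}
    (hp : p.natDegree ≤ n) :
    (1 - p * f).natDegree ≤ n + f.natDegree :=
  (natDegree_sub_le _ _).trans (max_le (by simp) (natDegree_mul_le.trans (by omega)))

theorem prod_X_sub_C_dvd_of_eval_eq_zero {K ι : Type*} [Field K] [Fintype ι] {z : ι → K}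
    (hz : Function.Injective z) {g : K[X]} (hg : ∀ i, g.eval (z i) = 0) :
    ∏ i, (X - C (z i)) ∣ g :=
  prod_dvd_of_coprime ((pairwise_coprime_X_sub_C hz).set_pairwise _) fun i _ =>
    dvd_iff_isRoot.2 (hg i)

def IsOptimalApproximant (ω : ℕ → ℝ) (n : ℕ) (f p : ℂ[X]) : Prop :=
  p.natDegree ≤ n ∧
    ∀ q : ℂ[X], q.natDegree ≤ n → wnormSq ω (1 - p * f) ≤ wnormSq ω (1 - q * f)

noncomputable def weightedCoeffs (ω : ℕ → ℝ) (N : ℕ) :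
    ℂ[X] →ₗ[ℂ] EuclideanSpace ℂ (Fin N) where
  toFun g := WithLp.toLp 2 fun k => (√(ω k) : ℂ) * g.coeff k
  map_add' g h := by ext k; simp [mul_add]
  map_smul' c g := by
    ext k
    simp only [coeff_smul, smul_eq_mul, RingHom.id_apply, PiLp.smul_apply]
    ring

noncomputable def kernelPoly (ω : ℕ → ℝ) (N : ℕ) (w : ℂ) : ℂ[X] :=
  ∑ k ∈ range N, C (conj w ^ k / ω k) * X ^ k

section WeightedCoeffs

variable {ω : ℕ → ℝ} {N : ℕ}

theorem inner_weightedCoeffs (hω : ∀ k, 0 ≤ ω k) (g h : ℂ[X]) :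
    inner ℂ (weightedCoeffs ω N g) (weightedCoeffs ω N h)
      = ∑ k ∈ range N, conj (g.coeff k) * h.coeff k * ω k := by
  rw [PiLp.inner_apply, ← Fin.sum_univ_eq_sum_range]
  refine sum_congr rfl fun k _ => ?_
  have hsq : (√(ω k) : ℂ) * √(ω k) = ω k := by
    rw [← Complex.ofReal_mul, Real.mul_self_sqrt (hω k)]
  simp only [weightedCoeffs, LinearMap.coe_mk, AddHom.coe_mk, RCLike.inner_apply, map_mul,
    Complex.conj_ofReal]
  linear_combination conj (g.coeff k) * h.coeff k * hsq

theorem norm_weightedCoeffs_sq (hω : ∀ k, 0 ≤ ω k) (g : ℂ[X]) :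
    ‖weightedCoeffs ω N g‖ ^ 2 = ∑ k ∈ range N, ‖g.coeff k‖ ^ 2 * ω k := by
  rw [EuclideanSpace.norm_sq_eq, ← Fin.sum_univ_eq_sum_range]
  refine sum_congr rfl fun k _ => ?_
  simp only [weightedCoeffs, LinearMap.coe_mk, AddHom.coe_mk, norm_mul, Complex.norm_real,
    Real.norm_eq_abs, mul_pow, sq_abs, Real.sq_sqrt (hω k)]
  ring

theorem wnormSq_eq_norm_weightedCoeffs_sq (hω : ∀ k, 0 ≤ ω k) {g : ℂ[X]}
    (hg : g.natDegree < N) : wnormSq ω g = ‖weightedCoeffs ω N g‖ ^ 2 := by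
  rw [norm_weightedCoeffs_sq hω, wnormSq]
  refine sum_subset (range_subset_range.2 hg) fun k _ hk => ?_
  rw [coeff_eq_zero_of_natDegree_lt (by simpa using hk)]
  simp

theorem coeff_eq_of_weightedCoeffs_eq (hω : ∀ k, 0 < ω k) {g h : ℂ[X]}
    (hgh : weightedCoeffs ω N g = weightedCoeffs ω N h) {k : ℕ} (hk : k < N) :
    g.coeff k = h.coeff k := by
  have := congrArg (· ⟨k, hk⟩) hgh
  simpa [weightedCoeffs, Real.sqrt_ne_zero'.2 (hω k)] using this

theorem coeff_kernelPoly (w : ℂ) (k : ℕ) :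
    (kernelPoly ω N w).coeff k = if k < N then conj w ^ k / ω k else 0 := by
  simp [kernelPoly, coeff_C_mul, coeff_X_pow]

theorem natDegree_kernelPoly_le (m : ℕ) (w : ℂ) : (kernelPoly ω (m + 1) w).natDegree ≤ m :=
  natDegree_sum_le_of_forall_le _ _ fun _ hk =>
    (natDegree_C_mul_X_pow_le _ _).trans (Nat.lt_succ_iff.1 (mem_range.1 hk))

theorem eval_kernelPoly (m : ℕ) (w z : ℂ) :
    (kernelPoly ω (m + 1) w).eval z = wker ω m z w := by
  simp only [kernelPoly, wker, eval_finsetSum, eval_mul, eval_C, eval_pow, eval_X]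
  exact sum_congr rfl fun k _ => by ring

theorem inner_weightedCoeffs_kernelPoly (hω : ∀ k, 0 < ω k) (w : ℂ) {g : ℂ[X]}
    (hg : g.natDegree < N) :
    inner ℂ (weightedCoeffs ω N (kernelPoly ω N w)) (weightedCoeffs ω N g) = g.eval w := by
  rw [inner_weightedCoeffs fun k => (hω k).le, eval_eq_sum_range' hg]
  refine sum_congr rfl fun k hk => ?_
  have : (ω k : ℂ) ≠ 0 := by exact_mod_cast (hω k).ne'
  rw [coeff_kernelPoly, if_pos (mem_range.1 hk)]
  simp only [map_div₀, map_pow, Complex.conj_conj, Complex.conj_ofReal]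
  field_simp

theorem inner_weightedCoeffs_sum_kernelPoly (hω : ∀ k, 0 < ω k) {ι : Type*} [Fintype ι]
    (z A : ι → ℂ) {g : ℂ[X]} (hg : g.natDegree < N) :
    inner ℂ (weightedCoeffs ω N (∑ i, A i • kernelPoly ω N (z i))) (weightedCoeffs ω N g)
      = ∑ i, conj (A i) * g.eval (z i) := by
  simp only [map_sum, map_smul, sum_inner, inner_smul_left,
    inner_weightedCoeffs_kernelPoly hω _ hg]

theorem linearIndependent_weightedCoeffs_kernelPoly (hω : ∀ k, 0 < ω k) {ι : Type*}
    [Fintype ι] [DecidableEq ι] {z : ι → ℂ} (hz : Function.Injective z)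
    (hN : Fintype.card ι ≤ N) :
    LinearIndependent ℂ fun i => weightedCoeffs ω N (kernelPoly ω N (z i)) := by
  rw [Fintype.linearIndependent_iff]
  intro A hA j
  have hbasis : (Lagrange.basis univ z j).natDegree < N := by
    rw [Lagrange.natDegree_basis hz.injOn (mem_univ j), card_univ]
    have := Fintype.card_pos_iff.2 ⟨j⟩
    omega
  have h := inner_weightedCoeffs_sum_kernelPoly hω z A hbasis
  simp only [map_sum, map_smul, hA, inner_zero_left] at h
  rw [sum_eq_single j (fun i _ hij => by rw [Lagrange.eval_basis_of_ne hij.symm (mem_univ i),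
    mul_zero]) (by simp), Lagrange.eval_basis_self hz.injOn (mem_univ j), mul_one] at h
  simpa using h.symm

theorem isUnit_det_wker (hω : ∀ k, 0 < ω k) {ι : Type*} [Fintype ι] [DecidableEq ι]
    {z : ι → ℂ} (hz : Function.Injective z) {m : ℕ} (hm : Fintype.card ι ≤ m + 1) :
    IsUnit (Matrix.of fun l j => wker ω m (z l) (z j)).det := by
  have hgram : Matrix.gram ℂ (fun i => weightedCoeffs ω (m + 1) (kernelPoly ω (m + 1) (z i)))
      = Matrix.of fun l j => wker ω m (z l) (z j) := by
    ext l j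
    rw [Matrix.gram_apply, inner_weightedCoeffs_kernelPoly hω _
      ((natDegree_kernelPoly_le m _).trans_lt m.lt_succ_self), eval_kernelPoly, Matrix.of_apply]
  rw [← hgram, ← Matrix.isUnit_iff_isUnit_det]
  exact (Matrix.posDef_gram_of_linearIndependent
    (linearIndependent_weightedCoeffs_kernelPoly hω hz hm)).isUnit

theorem IsOptimalApproximant.inner_weightedCoeffs_eq_zero (hω : ∀ k, 0 ≤ ω k) {n : ℕ}
    {f p : ℂ[X]} (hp : IsOptimalApproximant ω n f p) (hN : n + f.natDegree < N) {q : ℂ[X]}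
    (hq : q.natDegree ≤ n) :
    inner ℂ (weightedCoeffs ω N (1 - p * f)) (weightedCoeffs ω N (q * f)) = 0 := by
  refine inner_eq_zero_of_forall_norm_le_norm_sub_smul fun t => ?_
  have hpt : (p + C t * q).natDegree ≤ n :=
    natDegree_add_le_of_degree_le hp.1 ((natDegree_C_mul_le _ _).trans hq)
  have hle := hp.2 _ hpt
  have hperturb : 1 - (p + C t * q) * f = 1 - p * f - t • (q * f) := by
    rw [smul_eq_C_mul]; ring
  rw [hperturb,
    wnormSq_eq_norm_weightedCoeffs_sq hω ((natDegree_one_sub_mul_le hp.1).trans_lt hN),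
    wnormSq_eq_norm_weightedCoeffs_sq hω
      (hperturb ▸ (natDegree_one_sub_mul_le hpt).trans_lt hN)] at hle
  rw [← map_smul, ← map_sub]
  exact (sq_le_sq₀ (norm_nonneg _) (norm_nonneg _)).1 hle

theorem coeff_sum_kernelPoly {ι : Type*} [Fintype ι] (z A : ι → ℂ) {k : ℕ} (hk : k < N) :
    (∑ i, A i • kernelPoly ω N (z i)).coeff k = 1 / ω k * ∑ i, A i * conj (z i) ^ k := by
  simp only [finsetSum_coeff, coeff_smul, coeff_kernelPoly, if_pos hk, smul_eq_mul, mul_sum]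
  exact sum_congr rfl fun i _ => by ring

theorem weightedCoeffs_eq_zero_of_dvd {f g : ℂ[X]} {n : ℕ} (hf : f ≠ 0) (hfg : f ∣ g)
    (hg : g.natDegree ≤ n + f.natDegree)
    (horth : ∀ q : ℂ[X], q.natDegree ≤ n →
      inner ℂ (weightedCoeffs ω N g) (weightedCoeffs ω N (q * f)) = 0) :
    weightedCoeffs ω N g = 0 := by
  obtain ⟨q, rfl⟩ := hfg
  have hq : q.natDegree ≤ n := by
    rcases eq_or_ne q 0 with rfl | hq0
    · simp
    · rw [natDegree_mul hf hq0] at hg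
      omega
  rw [← inner_self_eq_zero (𝕜 := ℂ)]
  simpa [mul_comm] using horth q hq

theorem weightedCoeffs_one_sub_mul_eq_sum_kernelPoly (hω : ∀ k, 0 < ω k) {ι : Type*}
    [Fintype ι] {z : ι → ℂ} (hz : Function.Injective z) {f : ℂ[X]}
    (hf : f = ∏ i, (X - C (z i))) {n : ℕ} (hN : N = n + Fintype.card ι + 1) {p : ℂ[X]}
    (hp : IsOptimalApproximant ω n f p) {A : ι → ℂ}
    (hA : ∀ l, (∑ i, A i • kernelPoly ω N (z i)).eval (z l) = 1) :
    weightedCoeffs ω N (1 - p * f)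
      = weightedCoeffs ω N (∑ i, A i • kernelPoly ω N (z i)) := by
  set g := ∑ i, A i • kernelPoly ω N (z i)
  have hfz : ∀ i, f.eval (z i) = 0 := fun i => by
    simp only [hf, eval_prod, eval_sub, eval_X, eval_C]
    exact prod_eq_zero (mem_univ i) (sub_self _)
  have hfdeg : f.natDegree = Fintype.card ι := by simp [hf]
  have hf0 : f ≠ 0 := hf ▸ (monic_prod_of_monic _ _ fun i _ => monic_X_sub_C _).ne_zero
  have hgdeg : g.natDegree ≤ n + f.natDegree := natDegree_sum_le_of_forall_le _ _ fun i _ =>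
    (natDegree_smul_le _ _).trans (hN ▸ hfdeg ▸ natDegree_kernelPoly_le _ _)
  have hdvd : f ∣ 1 - p * f - g :=
    (dvd_of_eq hf).trans (prod_X_sub_C_dvd_of_eval_eq_zero hz fun l => by simp [hfz, g, hA])
  rw [← sub_eq_zero, ← map_sub]
  refine weightedCoeffs_eq_zero_of_dvd hf0 hdvd
    ((natDegree_sub_le_of_le (natDegree_one_sub_mul_le hp.1) hgdeg).trans_eq (max_self _))
    fun q hq => ?_
  rw [map_sub, inner_sub_left, hp.inner_weightedCoeffs_eq_zero (fun k => (hω k).le)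
    (by omega) hq, inner_weightedCoeffs_sum_kernelPoly hω _ _
    (natDegree_mul_le.trans_lt (by omega))]
  simp [hfz]

end WeightedCoeffs

theorem stmt3_general
    (ω : ℕ → ℝ) (hωpos : ∀ k, 0 < ω k)
    (d : ℕ) (z : Fin d → ℂ)
    (hzinj : Function.Injective z)
    (f : Polynomial ℂ) (hf : f = ∏ i, (Polynomial.X - Polynomial.C (z i)))
    (n : ℕ) (p : Polynomial ℂ) (hpdeg : p.natDegree ≤ n)
    (hpopt : ∀ q : Polynomial ℂ, q.natDegree ≤ n →
      wnormSq ω (1 - p * f) ≤ wnormSq ω (1 - q * f))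
    (E : Matrix (Fin d) (Fin d) ℂ)
    (hE : ∀ l m, E l m = wker ω (n + d) (z l) (z m))
    (A : Fin d → ℂ) (hA : A = E⁻¹.mulVec (fun _ => 1)) :
    IsUnit E.det ∧
    ∀ k : ℕ, k ≤ n + d →
      ((1 : Polynomial ℂ) - p * f).coeff k
        = (1 / (ω k : ℂ)) * ∑ i, A i * (starRingEnd ℂ (z i)) ^ k := by
  have hdet : IsUnit E.det := by
    rw [show E = Matrix.of fun l m => wker ω (n + d) (z l) (z m) from Matrix.ext hE]
    exact isUnit_det_wker hωpos hzinj (by rw [Fintype.card_fin]; omega)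
  have hEA : E.mulVec A = fun _ => 1 := by
    rw [hA, Matrix.mulVec_mulVec, Matrix.mul_nonsing_inv _ hdet, Matrix.one_mulVec]
  have hinterp : ∀ l, (∑ i, A i • kernelPoly ω (n + d + 1) (z i)).eval (z l) = 1 := by
    intro l
    simpa [eval_finsetSum, eval_kernelPoly, hE, Matrix.mulVec, dotProduct, mul_comm]
      using congrFun hEA l
  have hresidual := weightedCoeffs_one_sub_mul_eq_sum_kernelPoly hωpos hzinj hf
    (by rw [Fintype.card_fin]) ⟨hpdeg, hpopt⟩ hinterp
  refine ⟨hdet, fun k hk => ?_⟩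
  rw [coeff_eq_of_weightedCoeffs_eq hωpos hresidual (by omega),
    coeff_sum_kernelPoly _ _ (by omega)]

theorem stmt3
    (ω : ℕ → ℝ) (hω0 : ω 0 = 1) (hωpos : ∀ k, 0 < ω k)
    (hωlim : Filter.Tendsto (fun k => ω k / ω (k + 1)) Filter.atTop (nhds 1))
    (d : ℕ) (hd : 0 < d) (z : Fin d → ℂ)
    (hzinj : Function.Injective z) (hz0 : ∀ i, z i ≠ 0)
    (f : Polynomial ℂ) (hf : f = ∏ i, (Polynomial.X - Polynomial.C (z i)))
    (n : ℕ) (p : Polynomial ℂ) (hpdeg : p.natDegree ≤ n)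
    (hpopt : ∀ q : Polynomial ℂ, q.natDegree ≤ n →
      wnormSq ω (1 - p * f) ≤ wnormSq ω (1 - q * f))
    (E : Matrix (Fin d) (Fin d) ℂ)
    (hE : ∀ l m, E l m = wker ω (n + d) (z l) (z m))
    (A : Fin d → ℂ) (hA : A = E⁻¹.mulVec (fun _ => 1)) :
    IsUnit E.det ∧
    ∀ k : ℕ, k ≤ n + d →
      ((1 : Polynomial ℂ) - p * f).coeff k
        = (1 / (ω k : ℂ)) * ∑ i, A i * (starRingEnd ℂ (z i)) ^ k :=
  stmt3_general ω hωpos d z hzinj f hf n p hpdeg hpopt E hE A hA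
end

section
/- Let f be a complex polynomial with f(0) ≠ 0 whose zeros are simple (distinct) and all satisfy |z| ≥ 1, and for each n ∈ ℕ let p_n be the n-th optimal polynomial approximant to 1/f in the Hardy space H² (weights ω_k = 1 for all k). Then there exists a constant C > 0 such that for all n ∈ ℕ, the Wiener norm ∑_k |(1 − p_n f)^(k)| of the polynomial 1 − p_n f (the sum of the absolute values of its coefficients) is at most C. -/
/-!
The polynomial `1 - p_n f` has the least `H²` norm among all `1 - q f` with `deg q ≤ n`, that is,
among all polynomials `h` of degree `≤ n + deg f` with `h = 1` on the zero set of `f` (the zeros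
are simple). Such an `h` is obtained by Lagrange interpolation on the zeros `z`, using at `z`
the polynomial `(n + 1)⁻¹ ∑_{k ≤ n} (X / z)^k` in place of the constant `1`; since `|z| ≥ 1`,
its coefficients are `O(1 / n)`, so `‖1 - p_n f‖²_{H²} = O(1 / n)`. Cauchy–Schwarz over the
`n + deg f + 1` coefficients then bounds the Wiener norm uniformly in `n`.
-/

/-- The squared `H²` (Hardy space) norm of a polynomial `g = ∑ a_k z^k`:
`∑_k |a_k|²` (weights `ω_k = 1`). -/
noncomputable def hardyNormSq (g : Polynomial ℂ) : ℝ :=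
  ∑ k ∈ Finset.range (g.natDegree + 1), ‖g.coeff k‖ ^ 2

/-- The Wiener norm of a polynomial: the sum of the absolute values of its
coefficients. -/
noncomputable def wienerNorm (h : Polynomial ℂ) : ℝ :=
  ∑ k ∈ Finset.range (h.natDegree + 1), ‖h.coeff k‖

open Polynomial Finset

theorem Polynomial.sum_range_natDegree_succ_eq {R M : Type*} [Semiring R] [AddCommMonoid M]
    {g : R[X]} {N : ℕ} (hN : g.natDegree ≤ N) (φ : R → M) (hφ : φ 0 = 0) :
    ∑ k ∈ range (g.natDegree + 1), φ (g.coeff k) = ∑ k ∈ range (N + 1), φ (g.coeff k) := by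
  rw [← sum_over_range' g (f := fun _ => φ) (fun _ => hφ) (g.natDegree + 1) (by omega),
    sum_over_range' g (f := fun _ => φ) (fun _ => hφ) (N + 1) (by omega)]

section Norms

variable {g : ℂ[X]} {N : ℕ}

theorem wienerNorm_eq_sum_range (hN : g.natDegree ≤ N) :
    wienerNorm g = ∑ k ∈ range (N + 1), ‖g.coeff k‖ :=
  sum_range_natDegree_succ_eq hN _ norm_zero

theorem hardyNormSq_eq_sum_range (hN : g.natDegree ≤ N) :
    hardyNormSq g = ∑ k ∈ range (N + 1), ‖g.coeff k‖ ^ 2 :=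
  sum_range_natDegree_succ_eq hN (‖·‖ ^ 2) (by simp)

theorem wienerNorm_nonneg (g : ℂ[X]) : 0 ≤ wienerNorm g :=
  sum_nonneg fun _ _ => norm_nonneg _

theorem sum_range_norm_coeff_le_wienerNorm (g : ℂ[X]) (m : ℕ) :
    ∑ k ∈ range m, ‖g.coeff k‖ ≤ wienerNorm g := by
  rw [wienerNorm_eq_sum_range (le_max_left g.natDegree m)]
  exact sum_le_sum_of_subset_of_nonneg (range_subset_range.mpr (by omega))
    fun _ _ _ => norm_nonneg _

theorem norm_coeff_mul_le (a b : ℂ[X]) {M : ℝ} (hb : ∀ j, ‖b.coeff j‖ ≤ M) (k : ℕ) :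
    ‖(a * b).coeff k‖ ≤ wienerNorm a * M := by
  have hM : 0 ≤ M := (norm_nonneg _).trans (hb 0)
  calc ‖(a * b).coeff k‖
      ≤ ∑ ij ∈ antidiagonal k, ‖a.coeff ij.1‖ * ‖b.coeff ij.2‖ := by
        rw [coeff_mul]
        exact (norm_sum_le _ _).trans_eq (sum_congr rfl fun _ _ => norm_mul _ _)
    _ ≤ ∑ ij ∈ antidiagonal k, ‖a.coeff ij.1‖ * M := by gcongr; exact hb _
    _ = (∑ i ∈ range (k + 1), ‖a.coeff i‖) * M := by
        rw [← sum_mul, Nat.sum_antidiagonal_eq_sum_range_succ_mk]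
    _ ≤ wienerNorm a * M := by gcongr; exact sum_range_norm_coeff_le_wienerNorm a _

theorem hardyNormSq_le_of_norm_coeff_le (hN : g.natDegree ≤ N) {M : ℝ}
    (hg : ∀ k, ‖g.coeff k‖ ≤ M) : hardyNormSq g ≤ (N + 1) * M ^ 2 := by
  rw [hardyNormSq_eq_sum_range hN]
  calc ∑ k ∈ range (N + 1), ‖g.coeff k‖ ^ 2 ≤ ∑ _k ∈ range (N + 1), M ^ 2 := by
        gcongr with k; exact hg k
    _ = (N + 1) * M ^ 2 := by simp

theorem wienerNorm_sq_le (hN : g.natDegree ≤ N) :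
    wienerNorm g ^ 2 ≤ (N + 1) * hardyNormSq g := by
  rw [wienerNorm_eq_sum_range hN, hardyNormSq_eq_sum_range hN]
  simpa using sq_sum_le_card_mul_sum_sq (s := range (N + 1)) (f := fun k => ‖g.coeff k‖)

theorem wienerNorm_le_of_hardyNormSq_le (hN : g.natDegree ≤ N) {M : ℝ} (hM : 0 ≤ M)
    (hg : hardyNormSq g ≤ (N + 1) * M ^ 2) : wienerNorm g ≤ (N + 1) * M := by
  refine (pow_le_pow_iff_left₀ (wienerNorm_nonneg g) (by positivity) two_ne_zero).mp ?_
  calc wienerNorm g ^ 2 ≤ (N + 1) * hardyNormSq g := wienerNorm_sq_le hN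
    _ ≤ (N + 1) * ((N + 1) * M ^ 2) := by gcongr
    _ = ((N + 1) * M) ^ 2 := by ring

end Norms

noncomputable def geomAverage (n : ℕ) (w : ℂ) : ℂ[X] :=
  ∑ k ∈ range (n + 1), C (((n : ℂ) + 1)⁻¹ * w⁻¹ ^ k) * X ^ k

section GeomAverage

variable (n : ℕ) {w : ℂ}

theorem coeff_geomAverage (k : ℕ) :
    (geomAverage n w).coeff k = if k < n + 1 then ((n : ℂ) + 1)⁻¹ * w⁻¹ ^ k else 0 := by
  simp only [geomAverage, finsetSum_coeff, coeff_C_mul_X_pow, sum_ite_eq, mem_range]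

theorem natDegree_geomAverage_le : (geomAverage n w).natDegree ≤ n :=
  natDegree_le_iff_coeff_eq_zero.mpr fun k hk => by
    rw [coeff_geomAverage, if_neg (by omega)]

theorem eval_geomAverage_self (hw : w ≠ 0) : (geomAverage n w).eval w = 1 := by
  have hn : (n : ℂ) + 1 ≠ 0 := by exact_mod_cast n.succ_ne_zero
  simp only [geomAverage, eval_finsetSum, eval_mul, eval_C, eval_pow, eval_X, mul_assoc,
    ← mul_pow, inv_mul_cancel₀ hw, one_pow, mul_one, sum_const, card_range, nsmul_eq_mul]
  push_cast
  exact mul_inv_cancel₀ hn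

theorem norm_coeff_geomAverage_le (hw : 1 ≤ ‖w‖) (k : ℕ) :
    ‖(geomAverage n w).coeff k‖ ≤ ((n : ℝ) + 1)⁻¹ := by
  rw [coeff_geomAverage]
  split_ifs
  · rw [norm_mul, norm_pow, norm_inv, norm_inv, ← Nat.cast_add_one, Complex.norm_natCast]
    push_cast
    exact mul_le_of_le_one_right (by positivity)
      (pow_le_one₀ (by positivity) (inv_le_one_of_one_le₀ hw))
  · rw [norm_zero]; positivity

end GeomAverage

noncomputable def flatInterpolant (s : Finset ℂ) (n : ℕ) : ℂ[X] :=
  ∑ z ∈ s, Lagrange.basis s id z * geomAverage n z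

section FlatInterpolant

variable (s : Finset ℂ) (n : ℕ)

theorem natDegree_flatInterpolant_le : (flatInterpolant s n).natDegree ≤ n + #s :=
  natDegree_sum_le_of_forall_le _ _ fun z hz => by
    have := Lagrange.natDegree_basis (v := id) Function.injective_id.injOn hz
    have := natDegree_geomAverage_le n (w := z)
    exact natDegree_mul_le.trans (by omega)

theorem eval_flatInterpolant {s} (hs : (0 : ℂ) ∉ s) {z : ℂ} (hz : z ∈ s) :
    (flatInterpolant s n).eval z = 1 := by
  rw [flatInterpolant, eval_finsetSum, sum_eq_single_of_mem z hz]
  · have hbasis : (Lagrange.basis s id z).eval z = 1 :=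
      Lagrange.eval_basis_self Function.injective_id.injOn hz
    rw [eval_mul, hbasis, one_mul, eval_geomAverage_self n (ne_of_mem_of_not_mem hz hs)]
  · intro w _ hwz
    have hbasis : (Lagrange.basis s id w).eval z = 0 := Lagrange.eval_basis_of_ne (v := id) hwz hz
    rw [eval_mul, hbasis, zero_mul]

theorem norm_coeff_flatInterpolant_le {s} (hs : ∀ z ∈ s, 1 ≤ ‖z‖) (k : ℕ) :
    ‖(flatInterpolant s n).coeff k‖ ≤
      (∑ z ∈ s, wienerNorm (Lagrange.basis s id z)) / ((n : ℝ) + 1) := by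
  rw [flatInterpolant, finsetSum_coeff, div_eq_mul_inv, sum_mul]
  exact (norm_sum_le _ _).trans <| sum_le_sum fun z hz =>
    norm_coeff_mul_le _ _ (norm_coeff_geomAverage_le n (hs z hz)) k

end FlatInterpolant

theorem Polynomial.Splits.dvd_of_forall_isRoot {K : Type*} [Field K] {f g : K[X]}
    (hf : f.Splits) (hf0 : f ≠ 0) (hsimple : ∀ z, f.rootMultiplicity z ≤ 1)
    (hg : ∀ z, f.IsRoot z → g.IsRoot z) : f ∣ g := by
  classical
  rcases eq_or_ne g 0 with rfl | hg0
  · exact dvd_zero f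
  have hnodup : f.roots.Nodup := Multiset.nodup_iff_count_le_one.mpr fun z => by
    rw [count_roots]; exact hsimple z
  refine hf.dvd_of_roots_le_roots hf0 ((Multiset.le_iff_subset hnodup).mpr fun z hz => ?_)
  exact (mem_roots hg0).mpr (hg z ((mem_roots hf0).mp hz))

theorem exists_natDegree_le_of_dvd_one_sub {R : Type*} [CommRing R] [NoZeroDivisors R]
    {f h : R[X]} {n : ℕ} (hf : f ≠ 0) (hdvd : f ∣ 1 - h) (hh : h.natDegree ≤ n + f.natDegree) :
    ∃ q : R[X], q.natDegree ≤ n ∧ 1 - q * f = h := by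
  obtain ⟨q, hq⟩ := hdvd
  refine ⟨q, ?_, by linear_combination hq⟩
  rcases eq_or_ne q 0 with rfl | hq0
  · simp
  have : (1 - h).natDegree ≤ n + f.natDegree :=
    (natDegree_sub_le _ _).trans (by rw [natDegree_one]; omega)
  rw [hq, natDegree_mul hf hq0] at this
  omega

theorem exists_one_sub_mul_norm_coeff_le_div {f : ℂ[X]}
    (hsimple : ∀ z, f.rootMultiplicity z ≤ 1) (hroots : ∀ z, f.IsRoot z → 1 ≤ ‖z‖) :
    ∃ B : ℝ, 0 ≤ B ∧ ∀ n : ℕ, ∃ q : ℂ[X], q.natDegree ≤ n ∧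
      (1 - q * f).natDegree ≤ n + f.natDegree ∧
      ∀ k, ‖(1 - q * f).coeff k‖ ≤ B / ((n : ℝ) + 1) := by
  classical
  have h0 : ¬f.IsRoot 0 := fun h => absurd (hroots 0 h) (by norm_num)
  have hf : f ≠ 0 := by
    rintro rfl
    exact h0 (by simp)
  set s := f.roots.toFinset
  have mem_s {z : ℂ} : z ∈ s ↔ f.IsRoot z := by simp [s, mem_roots hf]
  refine ⟨∑ z ∈ s, wienerNorm (Lagrange.basis s id z),
    sum_nonneg fun z _ => wienerNorm_nonneg _, fun n => ?_⟩
  have hdeg : (flatInterpolant s n).natDegree ≤ n + f.natDegree :=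
    (natDegree_flatInterpolant_le s n).trans
      (by gcongr; exact (Multiset.toFinset_card_le _).trans (card_roots' f))
  have hdvd : f ∣ 1 - flatInterpolant s n :=
    (IsAlgClosed.splits f).dvd_of_forall_isRoot hf hsimple fun z hz => by
      simp [IsRoot, eval_flatInterpolant n (mt mem_s.mp h0) (mem_s.mpr hz)]
  obtain ⟨q, hq, hqf⟩ := exists_natDegree_le_of_dvd_one_sub hf hdvd hdeg
  exact ⟨q, hq, hqf ▸ hdeg,
    hqf ▸ norm_coeff_flatInterpolant_le n fun z hz => hroots z (mem_s.mp hz)⟩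

theorem stmt6_general
    (f : Polynomial ℂ)
    (hsimple : ∀ z : ℂ, Polynomial.rootMultiplicity z f ≤ 1)
    (hroots : ∀ z : ℂ, f.IsRoot z → 1 ≤ ‖z‖)
    (p : ℕ → Polynomial ℂ) (hpdeg : ∀ n, (p n).natDegree ≤ n)
    (hpopt : ∀ n, ∀ q : Polynomial ℂ, q.natDegree ≤ n →
      hardyNormSq (1 - p n * f) ≤ hardyNormSq (1 - q * f)) :
    ∃ C : ℝ, 0 < C ∧ ∀ n : ℕ, wienerNorm (1 - p n * f) ≤ C := by
  obtain ⟨B, hB, hcompetitor⟩ := exists_one_sub_mul_norm_coeff_le_div hsimple hroots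
  set d := f.natDegree
  refine ⟨(d + 1) * B + 1, by positivity, fun n => ?_⟩
  obtain ⟨q, hq, hqdeg, hqcoeff⟩ := hcompetitor n
  have hdeg : (1 - p n * f).natDegree ≤ n + d := by
    have := natDegree_mul_le (p := p n) (q := f)
    have := hpdeg n
    exact (natDegree_sub_le _ _).trans (by rw [natDegree_one]; omega)
  have hhardy : hardyNormSq (1 - p n * f) ≤ ((n + d : ℕ) + 1) * (B / (n + 1)) ^ 2 :=
    (hpopt n q hq).trans (hardyNormSq_le_of_norm_coeff_le hqdeg hqcoeff)
  calc wienerNorm (1 - p n * f) ≤ ((n + d : ℕ) + 1) * (B / (n + 1)) :=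
        wienerNorm_le_of_hardyNormSq_le hdeg (by positivity) hhardy
    _ ≤ (d + 1) * B := by
        rw [mul_div_assoc', div_le_iff₀ (by positivity)]
        push_cast
        nlinarith [mul_nonneg (mul_nonneg d.cast_nonneg n.cast_nonneg) hB]
    _ ≤ (d + 1) * B + 1 := by linarith

theorem stmt6
    (f : Polynomial ℂ) (hf0 : f.eval 0 ≠ 0)
    (hsimple : ∀ z : ℂ, Polynomial.rootMultiplicity z f ≤ 1)
    (hroots : ∀ z : ℂ, f.IsRoot z → 1 ≤ ‖z‖)
    (p : ℕ → Polynomial ℂ) (hpdeg : ∀ n, (p n).natDegree ≤ n)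
    (hpopt : ∀ n, ∀ q : Polynomial ℂ, q.natDegree ≤ n →
      hardyNormSq (1 - p n * f) ≤ hardyNormSq (1 - q * f)) :
    ∃ C : ℝ, 0 < C ∧ ∀ n : ℕ, wienerNorm (1 - p n * f) ≤ C :=
  stmt6_general f hsimple hroots p hpdeg hpopt
end

section
/- Let f be a complex polynomial with f(0) ≠ 0 whose zeros are simple (distinct) and all satisfy |z| ≥ 1, and for each n ∈ ℕ let p_n be the n-th optimal polynomial approximant to 1/f in the Hardy space H² (weights ω_k = 1 for all k). Then for every compact set K contained in the closed unit disc {z : |z| ≤ 1} with K disjoint from the zero set Z(f) of f, sup_{z ∈ K} |1 − p_n(z) f(z)| → 0 as n → ∞. -/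
open Polynomial Finset Filter Topology ComplexConjugate

namespace Polynomial

lemma memℓp_coeff (g : ℂ[X]) : Memℓp (fun k => g.coeff k) 2 := by
  refine (memℓp_zero ?_).of_exponent_ge bot_le
  convert g.support.finite_toSet
  ext; simp

noncomputable def coeffL2 : ℂ[X] →ₗ[ℂ] lp (fun _ : ℕ => ℂ) 2 where
  toFun g := ⟨fun k => g.coeff k, g.memℓp_coeff⟩
  map_add' _ _ := by ext; simp; rfl
  map_smul' _ _ := by ext; simp

@[simp]
lemma coeffL2_apply (g : ℂ[X]) (k : ℕ) : coeffL2 g k = g.coeff k := rfl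

lemma norm_coeffL2_sq_eq_sum_range (g : ℂ[X]) {N : ℕ} (hN : g.natDegree < N) :
    ‖coeffL2 g‖ ^ 2 = ∑ k ∈ range N, ‖g.coeff k‖ ^ 2 := by
  have h := lp.norm_rpow_eq_tsum (p := 2) (by norm_num) (coeffL2 g)
  simp only [ENNReal.toReal_ofNat, Real.rpow_two, coeffL2_apply] at h
  rw [h, tsum_eq_sum]
  intro k hk
  rw [coeff_eq_zero_of_natDegree_lt (hN.trans_le (by simpa using hk)), norm_zero,
    zero_pow two_ne_zero]

lemma hardyNormSq_eq_norm_coeffL2_sq (g : ℂ[X]) : hardyNormSq g = ‖coeffL2 g‖ ^ 2 :=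
  (g.norm_coeffL2_sq_eq_sum_range (Nat.lt_succ_self _)).symm

lemma norm_coeff_le_norm_coeffL2 (g : ℂ[X]) (k : ℕ) : ‖g.coeff k‖ ≤ ‖coeffL2 g‖ :=
  lp.norm_apply_le_norm (E := fun _ : ℕ => ℂ) two_ne_zero (coeffL2 g) k

lemma norm_coeffL2_X_pow_mul (g : ℂ[X]) (a : ℕ) : ‖coeffL2 (X ^ a * g)‖ = ‖coeffL2 g‖ := by
  have hdeg : (X ^ a * g).natDegree < a + (g.natDegree + 1) := by
    have := natDegree_mul_le (p := (X : ℂ[X]) ^ a) (q := g)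
    rw [natDegree_X_pow] at this
    omega
  rw [← sq_eq_sq₀ (norm_nonneg _) (norm_nonneg _), norm_coeffL2_sq_eq_sum_range _ hdeg,
    norm_coeffL2_sq_eq_sum_range _ (Nat.lt_succ_self _), sum_range_add]
  have hlow : ∑ k ∈ range a, ‖(X ^ a * g).coeff k‖ ^ 2 = 0 :=
    sum_eq_zero fun k hk => by simp [coeff_X_pow_mul', not_le.2 (mem_range.1 hk)]
  rw [hlow, zero_add]
  simp [coeff_X_pow_mul']

lemma norm_coeffL2_mul_le (u v : ℂ[X]) {N : ℕ} (hN : u.natDegree < N) :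
    ‖coeffL2 (u * v)‖ ≤ (∑ a ∈ range N, ‖u.coeff a‖) * ‖coeffL2 v‖ := by
  conv_lhs => rw [u.as_sum_range' N hN, sum_mul]
  rw [map_sum, sum_mul]
  refine (norm_sum_le _ _).trans (sum_le_sum fun a _ => ?_)
  rw [← C_mul_X_pow_eq_monomial, mul_assoc, ← smul_eq_C_mul, map_smul, norm_smul,
    norm_coeffL2_X_pow_mul]

lemma norm_eval_le_of_norm_le (g : ℂ[X]) {r : ℝ} (hr : r < 1) {z : ℂ} (hz : ‖z‖ ≤ r) :
    ‖g.eval z‖ ≤ ‖coeffL2 g‖ * √((1 - r ^ 2)⁻¹) := by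
  set N := g.natDegree + 1
  have hr0 : 0 ≤ r := (norm_nonneg z).trans hz
  have hr2 : r ^ 2 < 1 := by nlinarith
  have hgeom : ∑ k ∈ range N, (‖z‖ ^ k) ^ 2 ≤ (1 - r ^ 2)⁻¹ := by
    calc ∑ k ∈ range N, (‖z‖ ^ k) ^ 2 ≤ ∑ k ∈ range N, (r ^ 2) ^ k :=
          sum_le_sum fun k _ => by rw [← pow_mul, mul_comm, pow_mul]; gcongr
      _ ≤ (r ^ 2) ^ 0 / (1 - r ^ 2) :=
          range_eq_Ico N ▸ geom_sum_Ico_le_of_lt_one (by positivity) hr2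
      _ = (1 - r ^ 2)⁻¹ := by rw [pow_zero, one_div]
  calc ‖g.eval z‖ ≤ ∑ k ∈ range N, ‖g.coeff k‖ * ‖z‖ ^ k := by
        rw [eval_eq_sum_range]
        exact (norm_sum_le _ _).trans_eq (by simp [N, norm_pow])
    _ ≤ √(∑ k ∈ range N, ‖g.coeff k‖ ^ 2) * √(∑ k ∈ range N, (‖z‖ ^ k) ^ 2) :=
        Real.sum_mul_le_sqrt_mul_sqrt _ _ _
    _ ≤ ‖coeffL2 g‖ * √((1 - r ^ 2)⁻¹) := by
        rw [← norm_coeffL2_sq_eq_sum_range g (Nat.lt_succ_self _), Real.sqrt_sq (norm_nonneg _)]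
        gcongr

lemma norm_eval_le_card_mul (g : ℂ[X]) {s : Finset ℕ} (hs : ∀ k ∉ s, g.coeff k = 0) {z : ℂ}
    (hz : ‖z‖ ≤ 1) : ‖g.eval z‖ ≤ s.card * ‖coeffL2 g‖ := by
  have hsupp : g.support ⊆ s := fun k hk => by
    by_contra h; exact mem_support_iff.1 hk (hs k h)
  rw [eval_eq_sum, sum_def,
    sum_subset hsupp fun k _ hk => by rw [notMem_support_iff.1 hk, zero_mul]]
  calc ‖∑ k ∈ s, g.coeff k * z ^ k‖ ≤ ∑ k ∈ s, ‖coeffL2 g‖ := by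
        refine (norm_sum_le _ _).trans (sum_le_sum fun k _ => ?_)
        rw [norm_mul, norm_pow]
        exact (mul_le_of_le_one_right (norm_nonneg _) (pow_le_one₀ (norm_nonneg z) hz)).trans
          (norm_coeff_le_norm_coeffL2 g k)
    _ = s.card * ‖coeffL2 g‖ := by rw [sum_const, nsmul_eq_mul]

/-- `f^*(z) = z ^ deg f * conj (f (1 / conj z))`, the reflection of `f` in the unit circle. -/
noncomputable def conjReverse (f : ℂ[X]) : ℂ[X] := (f.map (starRingEnd ℂ)).reverse

lemma natDegree_conjReverse_le (f : ℂ[X]) : f.conjReverse.natDegree ≤ f.natDegree :=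
  (reverse_natDegree_le _).trans (natDegree_map _).le

lemma conjReverse_X_pow_mul (f : ℂ[X]) (j : ℕ) : (X ^ j * f).conjReverse = f.conjReverse := by
  rw [conjReverse, Polynomial.map_mul, Polynomial.map_pow, map_X, reverse_X_pow_mul, conjReverse]

lemma eval_conjReverse_zero (f : ℂ[X]) : f.conjReverse.eval 0 = conj f.leadingCoeff := by
  rw [← coeff_zero_eq_eval_zero, conjReverse, coeff_zero_reverse, leadingCoeff_map]

lemma eval_conjReverse_eq_zero_iff (f : ℂ[X]) {z : ℂ} (hz : z ≠ 0) :
    f.conjReverse.eval z = 0 ↔ f.IsRoot (conj z)⁻¹ := by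
  let := invertibleOfNonzero (inv_ne_zero hz)
  have hz' : ⅟(z⁻¹) = z := by simp
  rw [conjReverse, ← eval₂_id]
  conv_lhs => rw [← hz']
  rw [eval₂_reverse_eq_zero_iff, eval₂_id, eval_map, ← Complex.conj_conj z⁻¹, eval₂_hom,
    map_eq_zero, IsRoot, map_inv₀]

lemma inner_coeffL2_eq_coeff_mul_conjReverse (u v : ℂ[X]) :
    inner ℂ (coeffL2 u) (coeffL2 v) = (v * u.conjReverse).coeff u.natDegree := by
  set d := u.natDegree
  rw [lp.inner_eq_tsum, tsum_eq_sum (s := range (d + 1)), coeff_mul,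
    Nat.sum_antidiagonal_eq_sum_range_succ_mk]
  · refine sum_congr rfl fun k hk => ?_
    have hk : k ≤ d := Nat.lt_succ_iff.1 (mem_range.1 hk)
    rw [conjReverse, coeff_reverse, natDegree_map, revAt_le (Nat.sub_le d k),
      Nat.sub_sub_self hk, coeff_map]
    simp
  · intro k hk
    simp [coeff_eq_zero_of_natDegree_lt (show d < k by simpa using hk)]

lemma inner_coeffL2_mul_one_sub_mul_eq_zero {f p : ℂ[X]} {n : ℕ} (hp : p.natDegree ≤ n)
    (hopt : ∀ q : ℂ[X], q.natDegree ≤ n → ‖coeffL2 (1 - p * f)‖ ≤ ‖coeffL2 (1 - q * f)‖)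
    {q : ℂ[X]} (hq : q.natDegree ≤ n) :
    inner ℂ (coeffL2 (q * f)) (coeffL2 (1 - p * f)) = 0 := by
  set K := (degreeLE ℂ n).map (coeffL2 ∘ₗ LinearMap.mulRight ℂ f)
  have mem_K {q : ℂ[X]} (hq : q.natDegree ≤ n) : coeffL2 (q * f) ∈ K :=
    ⟨q, mem_degreeLE.2 (natDegree_le_iff_degree_le.1 hq), rfl⟩
  have hmin : ‖coeffL2 1 - coeffL2 (p * f)‖ = ⨅ w : K, ‖coeffL2 1 - w‖ := by
    refine le_antisymm (le_ciInf fun w => ?_) (ciInf_le ⟨0, ?_⟩ (⟨_, mem_K hp⟩ : K))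
    · obtain ⟨q, hq, hw⟩ := Submodule.mem_map.1 w.2
      rw [← hw, LinearMap.comp_apply, LinearMap.mulRight_apply, ← map_sub]
      exact hopt q (natDegree_le_iff_degree_le.2 (mem_degreeLE.1 hq))
    · rintro _ ⟨w, rfl⟩
      exact norm_nonneg _
  rw [inner_eq_zero_symm, map_sub]
  exact (K.norm_eq_iInf_iff_inner_eq_zero (mem_K hp)).1 hmin _ (mem_K hq)

lemma coeff_one_sub_mul_mul_conjReverse_eq_zero {f p : ℂ[X]} (hf : f ≠ 0) {n : ℕ}
    (hp : p.natDegree ≤ n)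
    (hopt : ∀ q : ℂ[X], q.natDegree ≤ n → ‖coeffL2 (1 - p * f)‖ ≤ ‖coeffL2 (1 - q * f)‖)
    {k : ℕ} (hk₁ : f.natDegree ≤ k) (hk₂ : k ≤ n + f.natDegree) :
    ((1 - p * f) * f.conjReverse).coeff k = 0 := by
  obtain ⟨j, rfl⟩ := Nat.exists_eq_add_of_le hk₁
  have h := inner_coeffL2_mul_one_sub_mul_eq_zero hp hopt (q := X ^ j)
    ((natDegree_X_pow_le j).trans (by omega))
  rwa [inner_coeffL2_eq_coeff_mul_conjReverse, conjReverse_X_pow_mul,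
    natDegree_X_pow_mul j hf] at h

lemma norm_eval_le_of_coeff_eq_zero (g : ℂ[X]) {d n : ℕ} (hdeg : g.natDegree ≤ n + 2 * d)
    (hgap : ∀ k, d ≤ k → k ≤ n + d → g.coeff k = 0) {z : ℂ} (hz : ‖z‖ ≤ 1) :
    ‖g.eval z‖ ≤ 2 * d * ‖coeffL2 g‖ := by
  have hs : ∀ k ∉ range d ∪ Ioc (n + d) (n + 2 * d), g.coeff k = 0 := fun k hk => by
    simp only [mem_union, mem_range, mem_Ioc, not_or, not_and, not_lt, not_le] at hk
    by_cases hkn : k ≤ n + d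
    · exact hgap k hk.1 hkn
    · exact coeff_eq_zero_of_natDegree_lt (hdeg.trans_lt (hk.2 (not_le.1 hkn)))
  refine (norm_eval_le_card_mul g hs hz).trans (mul_le_mul_of_nonneg_right ?_ (norm_nonneg _))
  have := card_union_le (range d) (Ioc (n + d) (n + 2 * d))
  simp only [card_range, Nat.card_Ioc] at this
  exact_mod_cast this.trans (by omega)

noncomputable def peakPoly (N : ℕ) (w : ℂ) : ℂ[X] := ∑ k ∈ range N, C (w⁻¹ ^ k / N) * X ^ k

lemma coeff_peakPoly (N : ℕ) (w : ℂ) (j : ℕ) :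
    (peakPoly N w).coeff j = if j < N then w⁻¹ ^ j / N else 0 := by
  simp [peakPoly]

lemma natDegree_peakPoly_lt {N : ℕ} (hN : 0 < N) (w : ℂ) : (peakPoly N w).natDegree < N :=
  (natDegree_sum_le_of_forall_le _ _ fun k hk =>
    (natDegree_C_mul_X_pow_le _ k).trans (Nat.le_pred_of_lt (mem_range.1 hk))).trans_lt
    (Nat.pred_lt hN.ne')

lemma eval_peakPoly_self {N : ℕ} (hN : 0 < N) {w : ℂ} (hw : w ≠ 0) : (peakPoly N w).eval w = 1 := by
  simp [peakPoly, eval_finsetSum, div_mul_eq_mul_div, inv_mul_cancel₀ (pow_ne_zero _ hw),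
    hN.ne']

lemma norm_coeff_peakPoly_le (N : ℕ) {w : ℂ} (hw : 1 ≤ ‖w‖) (j : ℕ) :
    ‖(peakPoly N w).coeff j‖ ≤ (N : ℝ)⁻¹ := by
  rw [coeff_peakPoly]
  split_ifs
  · rw [norm_div, norm_pow, norm_inv, Complex.norm_natCast, div_eq_mul_inv]
    exact mul_le_of_le_one_left (by positivity)
      (pow_le_one₀ (by positivity) (inv_le_one_of_one_le₀ hw))
  · simp

lemma norm_coeffL2_peakPoly_le {N : ℕ} (hN : 0 < N) {w : ℂ} (hw : 1 ≤ ‖w‖) :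
    ‖coeffL2 (peakPoly N w)‖ ≤ √(N : ℝ)⁻¹ := by
  refine Real.le_sqrt_of_sq_le ?_
  rw [norm_coeffL2_sq_eq_sum_range _ (natDegree_peakPoly_lt hN w)]
  calc ∑ j ∈ range N, ‖(peakPoly N w).coeff j‖ ^ 2 ≤ ∑ j ∈ range N, ((N : ℝ)⁻¹) ^ 2 :=
        sum_le_sum fun j _ => by gcongr; exact norm_coeff_peakPoly_le N hw j
    _ ≤ (N : ℝ)⁻¹ := by
        rw [sum_const, card_range, nsmul_eq_mul, sq, ← mul_assoc]
        exact mul_le_of_le_one_left (by positivity) (mul_inv_le_one)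

lemma norm_coeffL2_one_sub_peakPoly_mul_le {N : ℕ} (hN : 0 < N) {w : ℂ} (hw : 1 ≤ ‖w‖)
    (v : ℂ[X]) : ‖coeffL2 ((1 - peakPoly N w) * v)‖ ≤ 2 * ‖coeffL2 v‖ := by
  have hl1 : ∑ a ∈ range N, ‖(peakPoly N w).coeff a‖ ≤ 1 :=
    calc ∑ a ∈ range N, ‖(peakPoly N w).coeff a‖ ≤ ∑ a ∈ range N, (N : ℝ)⁻¹ :=
          sum_le_sum fun a _ => norm_coeff_peakPoly_le N hw a
      _ ≤ 1 := by rw [sum_const, card_range, nsmul_eq_mul]; exact mul_inv_le_one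
  rw [sub_mul, one_mul, map_sub, two_mul]
  refine (norm_sub_le _ _).trans (add_le_add_right ?_ _)
  exact (norm_coeffL2_mul_le _ v (natDegree_peakPoly_lt hN w)).trans
    (mul_le_of_le_one_left (norm_nonneg _) hl1)

lemma norm_coeffL2_one_sub_prod_le {ι : Type*} (s : Multiset ι) (g : ι → ℂ[X]) {ε : ℝ}
    (hg : ∀ i ∈ s, ‖coeffL2 (g i)‖ ≤ ε)
    (hmul : ∀ i ∈ s, ∀ v, ‖coeffL2 ((1 - g i) * v)‖ ≤ 2 * ‖coeffL2 v‖) :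
    ‖coeffL2 (1 - (s.map fun i => 1 - g i).prod)‖ ≤ (2 ^ Multiset.card s - 1) * ε := by
  induction s using Multiset.induction_on with
  | empty => simp
  | cons i s ih =>
    set W := (s.map fun i => 1 - g i).prod
    have hW := ih (fun j hj => hg j (Multiset.mem_cons_of_mem hj))
      (fun j hj => hmul j (Multiset.mem_cons_of_mem hj))
    have hgi := hg i (Multiset.mem_cons_self i s)
    rw [Multiset.map_cons, Multiset.prod_cons, Multiset.card_cons,
      show 1 - (1 - g i) * W = g i + (1 - g i) * (1 - W) by ring, map_add]
    calc _ ≤ ‖coeffL2 (g i)‖ + ‖coeffL2 ((1 - g i) * (1 - W))‖ := norm_add_le _ _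
      _ ≤ ε + 2 * ((2 ^ Multiset.card s - 1) * ε) :=
          add_le_add hgi ((hmul i (Multiset.mem_cons_self i s) _).trans (by gcongr))
      _ = (2 ^ (Multiset.card s + 1) - 1) * ε := by ring

lemma exists_norm_coeffL2_one_sub_mul_lt {f : ℂ[X]} (hf : f ≠ 0)
    (hroots : ∀ z : ℂ, f.IsRoot z → 1 ≤ ‖z‖) {ε : ℝ} (hε : 0 < ε) :
    ∃ q : ℂ[X], ‖coeffL2 (1 - q * f)‖ < ε := by
  obtain ⟨N, hN⟩ := exists_nat_gt ((2 ^ f.natDegree / ε) ^ 2)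
  have hN0 : 0 < N := by exact_mod_cast (sq_nonneg _).trans_lt hN
  have hw : ∀ w ∈ f.roots, 1 ≤ ‖w‖ := fun w hw => hroots w (mem_roots'.1 hw).2
  set W := (f.roots.map fun w => 1 - peakPoly N w).prod
  have hdvd : f ∣ W := by
    conv_lhs => rw [← C_leadingCoeff_mul_prod_multiset_X_sub_C
      (IsAlgClosed.card_roots_eq_natDegree (p := f))]
    rw [(isUnit_C.2 (leadingCoeff_ne_zero.2 hf).isUnit).mul_left_dvd]
    refine Multiset.prod_dvd_prod_of_dvd _ _ fun w hwf => dvd_iff_isRoot.2 ?_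
    have hw0 : w ≠ 0 := norm_pos_iff.1 (one_pos.trans_le (hw w hwf))
    simp [IsRoot, eval_peakPoly_self hN0 hw0]
  obtain ⟨q, hq⟩ := hdvd
  refine ⟨q, ?_⟩
  have hbound := norm_coeffL2_one_sub_prod_le f.roots (peakPoly N)
    (fun w hwf => norm_coeffL2_peakPoly_le hN0 (hw w hwf))
    (fun w hwf => norm_coeffL2_one_sub_peakPoly_mul_le hN0 (hw w hwf))
  rw [IsAlgClosed.card_roots_eq_natDegree] at hbound
  have hsqrt : 2 ^ f.natDegree / ε < √(N : ℝ) := (Real.lt_sqrt (by positivity)).2 hN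
  have hsqrt0 : 0 < √(N : ℝ) := Real.sqrt_pos.2 (by exact_mod_cast hN0)
  calc ‖coeffL2 (1 - q * f)‖ ≤ (2 ^ f.natDegree - 1) * √(N : ℝ)⁻¹ := by rwa [mul_comm q, ← hq]
    _ < 2 ^ f.natDegree / √(N : ℝ) := by
        rw [Real.sqrt_inv, ← div_eq_mul_inv]; gcongr; linarith
    _ < ε := by rwa [div_lt_iff₀ hsqrt0, ← div_lt_iff₀' hε]

lemma tendsto_norm_coeffL2_one_sub_mul {f : ℂ[X]} (hf : f ≠ 0)
    (hroots : ∀ z : ℂ, f.IsRoot z → 1 ≤ ‖z‖) {p : ℕ → ℂ[X]}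
    (hopt : ∀ n, ∀ q : ℂ[X], q.natDegree ≤ n → ‖coeffL2 (1 - p n * f)‖ ≤ ‖coeffL2 (1 - q * f)‖) :
    Tendsto (fun n => ‖coeffL2 (1 - p n * f)‖) atTop (𝓝 0) := by
  refine Metric.tendsto_atTop.2 fun ε hε => ?_
  obtain ⟨q, hq⟩ := exists_norm_coeffL2_one_sub_mul_lt hf hroots hε
  refine ⟨q.natDegree, fun n hn => ?_⟩
  rw [Real.dist_0_eq_abs, abs_norm]
  exact (hopt n q hn).trans_lt hq

lemma exists_lt_one_forall_norm_lt_of_isRoot {h : ℂ[X]} (hh : h ≠ 0) :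
    ∃ r < 1, ∀ z, h.IsRoot z → ‖z‖ < 1 → ‖z‖ < r := by
  set s := h.roots.toFinset.filter fun z => ‖z‖ < 1
  have hs : ∀ᶠ r in 𝓝[<] (1 : ℝ), ∀ z ∈ s, ‖z‖ < r :=
    (eventually_all_finset s).2 fun z hz =>
      eventually_nhdsWithin_of_eventually_nhds (eventually_gt_nhds (mem_filter.1 hz).2)
  obtain ⟨r, hr, hr1⟩ := (hs.and self_mem_nhdsWithin).exists
  exact ⟨r, hr1, fun z hz hz1 =>
    hr z (mem_filter.2 ⟨Multiset.mem_toFinset.2 (mem_roots'.2 ⟨hh, hz⟩), hz1⟩)⟩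

lemma exists_lt_one_forall_eval_conjReverse_ne_zero {f : ℂ[X]} (hf : f ≠ 0) :
    ∃ r < 1, ∀ z : ℂ, r ≤ ‖z‖ → ‖z‖ ≤ 1 → ¬ f.IsRoot z → f.conjReverse.eval z ≠ 0 := by
  have hf0 : f.conjReverse.eval 0 ≠ 0 := by
    simpa [eval_conjReverse_zero] using leadingCoeff_ne_zero.2 hf
  obtain ⟨r, hr1, hr⟩ := exists_lt_one_forall_norm_lt_of_isRoot
    (fun h : f.conjReverse = 0 => hf0 (by rw [h, eval_zero]))
  refine ⟨r, hr1, fun z hzr hz1 hfz hz => ?_⟩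
  have hz0 : z ≠ 0 := by rintro rfl; exact hf0 hz
  rcases hz1.lt_or_eq with hz1 | hz1
  · exact (hzr.trans_lt (hr z hz hz1)).false
  · rw [eval_conjReverse_eq_zero_iff f hz0,
      Complex.inv_eq_conj (by rwa [Complex.norm_conj]), Complex.conj_conj] at hz
    exact hfz hz

lemma exists_norm_eval_le_mul_norm_coeffL2 {f : ℂ[X]} (hf : f ≠ 0) {K : Set ℂ}
    (hK : IsCompact K) (hKsub : K ⊆ Metric.closedBall 0 1) (hKf : ∀ z ∈ K, ¬ f.IsRoot z) :
    ∃ C, ∀ (n : ℕ) (g : ℂ[X]), g.natDegree ≤ n + f.natDegree →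
      (∀ k, f.natDegree ≤ k → k ≤ n + f.natDegree → (g * f.conjReverse).coeff k = 0) →
      ∀ z ∈ K, ‖g.eval z‖ ≤ C * ‖coeffL2 g‖ := by
  set d := f.natDegree
  obtain ⟨r, hr1, hr⟩ := exists_lt_one_forall_eval_conjReverse_ne_zero hf
  have hne : ∀ z ∈ K ∩ {z | r ≤ ‖z‖}, f.conjReverse.eval z ≠ 0 := fun z ⟨hzK, hzr⟩ =>
    hr z hzr (by simpa using hKsub hzK) (hKf z hzK)
  obtain ⟨B, hB⟩ := (hK.inter_right (isClosed_le continuous_const continuous_norm))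
    |>.exists_bound_of_continuousOn (f.conjReverse.continuous.continuousOn.inv₀ hne)
  set L := ∑ a ∈ range (d + 1), ‖f.conjReverse.coeff a‖
  refine ⟨max √((1 - r ^ 2)⁻¹) (2 * d * L * B), fun n g hdeg hgap z hz => ?_⟩
  rcases lt_or_ge ‖z‖ r with hzr | hzr
  · exact (norm_eval_le_of_norm_le g hr1 hzr.le).trans
      (by rw [mul_comm]; gcongr; exact le_max_left _ _)
  · have hB' : ‖(f.conjReverse.eval z)⁻¹‖ ≤ B := hB z ⟨hz, hzr⟩
    have hmul : ‖coeffL2 (g * f.conjReverse)‖ ≤ L * ‖coeffL2 g‖ := by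
      rw [mul_comm]
      exact norm_coeffL2_mul_le _ _ (Nat.lt_succ_of_le (natDegree_conjReverse_le f))
    have hdeg' : (g * f.conjReverse).natDegree ≤ n + 2 * d :=
      natDegree_mul_le.trans (by linarith [natDegree_conjReverse_le f])
    have heval := norm_eval_le_of_coeff_eq_zero _ hdeg' hgap (by simpa using hKsub hz)
    calc ‖g.eval z‖ = ‖(g * f.conjReverse).eval z‖ * ‖(f.conjReverse.eval z)⁻¹‖ := by
          rw [← norm_mul, eval_mul, mul_assoc, mul_inv_cancel₀ (hne z ⟨hz, hzr⟩), mul_one]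
      _ ≤ (2 * d * (L * ‖coeffL2 g‖)) * B := by gcongr; exact heval.trans (by gcongr)
      _ = 2 * d * L * B * ‖coeffL2 g‖ := by ring
      _ ≤ _ := by gcongr; exact le_max_right _ _

end Polynomial

theorem stmt8_general
    (f : Polynomial ℂ) (hf0 : f.eval 0 ≠ 0)
    (hroots : ∀ z : ℂ, f.IsRoot z → 1 ≤ ‖z‖)
    (p : ℕ → Polynomial ℂ) (hpdeg : ∀ n, (p n).natDegree ≤ n)
    (hpopt : ∀ n, ∀ q : Polynomial ℂ, q.natDegree ≤ n →
      hardyNormSq (1 - p n * f) ≤ hardyNormSq (1 - q * f))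
    (K : Set ℂ) (hK : IsCompact K) (hKsub : K ⊆ Metric.closedBall (0 : ℂ) 1)
    (hKf : ∀ z ∈ K, ¬ f.IsRoot z) :
    TendstoUniformlyOn (fun n z => 1 - (p n).eval z * f.eval z)
      (fun _ => (0 : ℂ)) Filter.atTop K := by
  have hf : f ≠ 0 := by rintro rfl; exact hf0 eval_zero
  have hopt (n : ℕ) (q : ℂ[X]) (hq : q.natDegree ≤ n) :
      ‖coeffL2 (1 - p n * f)‖ ≤ ‖coeffL2 (1 - q * f)‖ := by
    have := hpopt n q hq
    rwa [hardyNormSq_eq_norm_coeffL2_sq, hardyNormSq_eq_norm_coeffL2_sq,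
      sq_le_sq₀ (norm_nonneg _) (norm_nonneg _)] at this
  obtain ⟨C, hC⟩ := exists_norm_eval_le_mul_norm_coeffL2 hf hK hKsub hKf
  have hbound (n : ℕ) (z : ℂ) (hz : z ∈ K) :
      ‖1 - (p n).eval z * f.eval z‖ ≤ C * ‖coeffL2 (1 - p n * f)‖ := by
    have hdeg : (1 - p n * f).natDegree ≤ n + f.natDegree :=
      (natDegree_sub_le _ _).trans
        (max_le (by simp) (natDegree_mul_le.trans (by linarith [hpdeg n])))
    simpa using hC n _ hdeg
      (fun k => coeff_one_sub_mul_mul_conjReverse_eq_zero hf (hpdeg n) (hopt n)) z hz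
  have hlim := (tendsto_norm_coeffL2_one_sub_mul hf hroots hopt).const_mul C
  rw [mul_zero] at hlim
  refine SeminormedAddGroup.tendstoUniformlyOn_zero.2 fun ε hε => ?_
  filter_upwards [hlim.eventually (gt_mem_nhds hε)] with n hn z hz
  exact (hbound n z hz).trans_lt hn

theorem stmt8
    (f : Polynomial ℂ) (hf0 : f.eval 0 ≠ 0)
    (hsimple : ∀ z : ℂ, Polynomial.rootMultiplicity z f ≤ 1)
    (hroots : ∀ z : ℂ, f.IsRoot z → 1 ≤ ‖z‖)
    (p : ℕ → Polynomial ℂ) (hpdeg : ∀ n, (p n).natDegree ≤ n)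
    (hpopt : ∀ n, ∀ q : Polynomial ℂ, q.natDegree ≤ n →
      hardyNormSq (1 - p n * f) ≤ hardyNormSq (1 - q * f))
    (K : Set ℂ) (hK : IsCompact K) (hKsub : K ⊆ Metric.closedBall (0 : ℂ) 1)
    (hKf : ∀ z ∈ K, ¬ f.IsRoot z) :
    TendstoUniformlyOn (fun n z => 1 - (p n).eval z * f.eval z)
      (fun _ => (0 : ℂ)) Filter.atTop K :=
  stmt8_general f hf0 hroots p hpdeg hpopt K hK hKsub hKf
end

section
/- Let ζ_1, …, ζ_s be distinct complex numbers with |ζ_i| > 1 for all i. Then the s×s matrix B with entries b_{l,m} = 1/(ζ_l · \overline{ζ_m} − 1) is Hermitian positive definite; in particular, det(B) > 0. -/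
open scoped ComplexOrder

/-!
With `c = ζ⁻¹` one has `B = D K Dᴴ` for the invertible diagonal matrix `D = diag c` and the
Szegő kernel matrix `K l m = (1 - c l * conj (c m))⁻¹` of the points `c l` of the unit disc.
Expanding `K` as a geometric series gives `xᴴ K x = ∑ₙ |∑ₘ x m * conj (c m) ^ n|²`, and these
power sums cannot all vanish for `x ≠ 0` because the `conj (c m)` are distinct (Vandermonde).
-/

open ComplexConjugate Matrix

theorem Matrix.exists_sum_mul_pow_ne_zero {R ι : Type*} [CommRing R] [IsDomain R] [Fintype ι]
    {w v : ι → R} (hw : Function.Injective w) (hv : v ≠ 0) :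
    ∃ k : ℕ, ∑ j, v j * w j ^ k ≠ 0 := by
  by_contra! h
  let e := (Fintype.equivFin ι).symm
  have hve : v ∘ e = 0 :=
    eq_zero_of_forall_pow_sum_mul_pow_eq_zero (hw.comp e.injective) fun i =>
      (e.sum_comp fun j => v j * w j ^ (i : ℕ)).trans (h i)
  exact hv <| funext fun j => by simpa using congrFun hve (e.symm j)

section SzegoKernel

variable {ι : Type*} [Fintype ι]

noncomputable def szegoKernelMatrix (c : ι → ℂ) : Matrix ι ι ℂ :=
  of fun l m => (1 - c l * conj (c m))⁻¹

theorem hasSum_dotProduct_szegoKernelMatrix_mulVec {c : ι → ℂ} (hc : ∀ i, ‖c i‖ < 1)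
    (x : ι → ℂ) :
    HasSum (fun n : ℕ => (Complex.normSq (∑ m, x m * conj (c m) ^ n) : ℂ))
      (star x ⬝ᵥ szegoKernelMatrix c *ᵥ x) := by
  have hterm (l m : ι) : HasSum (fun n : ℕ => star (x l) * ((c l * conj (c m)) ^ n * x m))
      (star (x l) * (szegoKernelMatrix c l m * x m)) := by
    have hlm : ‖c l * conj (c m)‖ < 1 := by
      rw [norm_mul, Complex.norm_conj]
      exact mul_lt_one_of_nonneg_of_lt_one_left (norm_nonneg _) (hc l) (hc m).le
    exact ((hasSum_geometric_of_norm_lt_one hlm).mul_right (x m)).mul_left _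
  convert hasSum_sum fun l _ => hasSum_sum fun m _ => hterm l m using 1
  · funext n
    simp only [Complex.normSq_eq_conj_mul_self, map_sum, map_mul, map_pow, Complex.conj_conj,
      Finset.sum_mul_sum, mul_pow]
    exact Finset.sum_congr rfl fun l _ => Finset.sum_congr rfl fun m _ => by
      simp only [RCLike.star_def]; ring
  · simp only [dotProduct, mulVec, Pi.star_apply, Finset.mul_sum]

theorem posDef_szegoKernelMatrix {c : ι → ℂ} (hinj : Function.Injective c)
    (hc : ∀ i, ‖c i‖ < 1) : (szegoKernelMatrix c).PosDef := by
  refine .of_dotProduct_mulVec_pos ?_ fun x hx => ?_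
  · ext l m
    simp [szegoKernelMatrix, mul_comm]
  · obtain ⟨n, hn⟩ := exists_sum_mul_pow_ne_zero ((starRingEnd ℂ).injective.comp hinj) hx
    refine hasSum_lt (f := 0) (i := n) (fun k => ?_) ?_ hasSum_zero
      (hasSum_dotProduct_szegoKernelMatrix_mulVec hc x)
    · exact Complex.zero_le_real.mpr (Complex.normSq_nonneg _)
    · exact Complex.zero_lt_real.mpr (Complex.normSq_pos.mpr hn)

theorem posDef_inv_mul_conj_sub_one [DecidableEq ι] {ζ : ι → ℂ} (hinj : Function.Injective ζ)
    (hζ : ∀ i, 1 < ‖ζ i‖) : (of fun l m => (ζ l * conj (ζ m) - 1)⁻¹).PosDef := by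
  have hζ0 (i : ι) : ζ i ≠ 0 := norm_pos_iff.mp (one_pos.trans (hζ i))
  have hD : IsUnit (diagonal ζ⁻¹) :=
    isUnit_diagonal.mpr (Pi.isUnit_iff.mpr fun i => (inv_ne_zero (hζ0 i)).isUnit)
  have hB : of (fun l m => (ζ l * conj (ζ m) - 1)⁻¹) =
      diagonal ζ⁻¹ * szegoKernelMatrix ζ⁻¹ * star (diagonal ζ⁻¹) := by
    ext l m
    simp only [szegoKernelMatrix, star_eq_conjTranspose, diagonal_conjTranspose, diagonal_mul,
      mul_diagonal, of_apply, Pi.inv_apply, Pi.star_apply, RCLike.star_def, map_inv₀]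
    have hm : conj (ζ m) ≠ 0 := (map_ne_zero _).mpr (hζ0 m)
    have hl := hζ0 l
    field_simp
  rw [hB, hD.posDef_star_right_conjugate_iff]
  exact posDef_szegoKernelMatrix (inv_injective.comp hinj) fun i => by
    simpa using inv_lt_one_of_one_lt₀ (hζ i)

end SzegoKernel

theorem stmt10_general
    (s : ℕ) (ζ : Fin s → ℂ)
    (hinj : Function.Injective ζ) (hζ : ∀ i, 1 < ‖ζ i‖)
    (B : Matrix (Fin s) (Fin s) ℂ)
    (hB : ∀ l m, B l m = 1 / (ζ l * starRingEnd ℂ (ζ m) - 1)) :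
    B.PosDef ∧ B.det.im = 0 ∧ 0 < B.det.re := by
  have hPD : B.PosDef := by
    convert posDef_inv_mul_conj_sub_one hinj hζ
    ext l m
    rw [hB, one_div]
    rfl
  obtain ⟨hre, him⟩ := Complex.pos_iff.mp hPD.det_pos
  exact ⟨hPD, him.symm, hre⟩

theorem stmt10
    (s : ℕ) (hs : 0 < s) (ζ : Fin s → ℂ)
    (hinj : Function.Injective ζ) (hζ : ∀ i, 1 < ‖ζ i‖)
    (B : Matrix (Fin s) (Fin s) ℂ)
    (hB : ∀ l m, B l m = 1 / (ζ l * starRingEnd ℂ (ζ m) - 1)) :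
    B.PosDef ∧ B.det.im = 0 ∧ 0 < B.det.re :=
  stmt10_general s ζ hinj hζ B hB
end
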